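/- arXiv:hep-th/9706118 — 2 statements merged into one kernel-verified Lean document; each statement's English description precedes it below -/
import Mathlib

section
/- Let A(z), B(z), C(z) be fields on M that are pairwise mutually local, with orders of locality k₀ (between A and C), ℓ₀ (between B and C), m₀ (between A and B). Then for any integers k, ℓ, m and any nonnegative integer n with n ≥ k₀ + ℓ₀ + m₀ − k − ℓ − m − 1, the identity (y−z)^n [A(x),B(y)] C(z) (x−y)^m (y−z)^ℓ (x−z)^k = (y−z)^n C(z) [A(x),B(y)] (x−y)^m (y−z)^ℓ (x−z)^k holds, where each factor (x−y)^m, (y−z)^ℓ, (x−z)^k with negative exponent is expanded in the region dictated by the operator ordering. -/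
open Finset

section VA

variable {k M : Type*} [Field k] [CharZero k] [AddCommGroup M] [Module k M]

/-- Generalized binomial coefficient `C(n,i)` for `n : ℤ`, `i : ℕ`. -/
def ichoose (n : ℤ) (i : ℕ) : ℤ :=
  if 0 ≤ n then (n.toNat.choose i : ℤ)
  else (-1) ^ i * ((((i : ℤ) - 1 - n).toNat.choose i : ℤ))

/-- `(-1)^m` for an integer `m`. -/
def msign (m : ℤ) : ℤ := if Even m then 1 else -1

/-- A series on `M`, given by its Fourier modes `A_n`. -/
abbrev Ser (M : Type*) : Type _ := ℤ → M → M

/-- `A(z)` is a field: modes applied to any vector vanish for large index. -/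
def IsFieldSer (A : Ser M) : Prop := ∀ v : M, ∃ n₀ : ℤ, ∀ n ≥ n₀, A n v = 0

/-- All modes are `k`-linear, i.e. the coefficients are endomorphisms of the
vector space `M`. -/
def IsLinSer (A : Ser M) : Prop := ∀ n : ℤ, IsLinearMap k (A n)

/-- Residual `m`-th product, in Fourier modes:
`(A_(m)B)_n = ∑_{i≥0} (-1)^i C(m,i) (A_{m-i} B_{n+i} - (-1)^m B_{m+n-i} A_i)`. -/
noncomputable def resProd (A B : Ser M) (m : ℤ) : Ser M := fun n v =>
  ∑ᶠ i : ℕ, ((-1 : ℤ) ^ i * ichoose m i) •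
    (A (m - (i : ℤ)) (B (n + (i : ℤ)) v) - msign m • B (m + n - (i : ℤ)) (A (i : ℤ) v))

/-- Mutual locality at order `n`, in Fourier modes:
`∑_{i=0}^n (-1)^i C(n,i) (A_{p+n-i} B_{q+i} - (-1)^n B_{q+n-i} A_{p+i}) = 0`. -/
def IsLocalAt (A B : Ser M) (n : ℕ) : Prop :=
  ∀ (p q : ℤ) (v : M),
    ∑ i ∈ Finset.range (n + 1), ((-1 : ℤ) ^ i * (n.choose i : ℤ)) •
      (A (p + (n : ℤ) - (i : ℤ)) (B (q + (i : ℤ)) v)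
        - (-1 : ℤ) ^ n • B (q + (n : ℤ) - (i : ℤ)) (A (p + (i : ℤ)) v)) = 0

/-- `A` and `B` are mutually local of order exactly `n₀`. -/
def HasOrder (A B : Ser M) (n₀ : ℕ) : Prop :=
  IsLocalAt A B n₀ ∧ ∀ n : ℕ, IsLocalAt A B n → n₀ ≤ n

/-- The identity field `I(z) = id`. -/
def idSer : Ser M := fun n v => if n = -1 then v else 0

/-- Derivative of a series: `(∂A)_n = -n A_{n-1}`. -/
def dSer (A : Ser M) : Ser M := fun n v => (-n) • A (n - 1) v

/-- Divided-power derivative: `(∂^{(i)}A)_n = (-1)^i C(n,i) A_{n-i}`. -/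
def dpowSer (i : ℕ) (A : Ser M) : Ser M := fun n v =>
  ((-1 : ℤ) ^ i * ichoose n i) • A (n - (i : ℤ)) v

/-- Normally ordered product `:A(z)B(z): = A(z)₋B(z) + B(z)A(z)₊`, in modes. -/
noncomputable def noProd (A B : Ser M) : Ser M := fun n v =>
  (∑ᶠ i : ℕ, A (-(i : ℤ) - 1) (B (n + (i : ℤ)) v)) + ∑ᶠ i : ℕ, B (n - 1 - (i : ℤ)) (A (i : ℤ) v)

/-- Coefficient of `x^{-a-1} y^{-b-1} z^{-c-1}` in
`A(x)B(y)C(z) (x-y)^m (y-z)^L (x-z)^e`, all binomials expanded in `|x|>|y|>|z|`. -/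
noncomputable def term1 (A B C : Ser M) (m L e a b c : ℤ) (v : M) : M :=
  ∑ᶠ (i : ℕ) (j : ℕ) (s : ℕ),
    ((-1 : ℤ) ^ (i + j + s) * ichoose m i * ichoose L j * ichoose e s) •
      A (a + m - (i : ℤ) + e - (s : ℤ))
        (B (b + (i : ℤ) + L - (j : ℤ)) (C (c + (j : ℤ) + (s : ℤ)) v))

/-- Coefficient in `B(y)A(x)C(z) (x-y)^m (y-z)^L (x-z)^e`, expanded in `|y|>|x|>|z|`. -/
noncomputable def term2 (A B C : Ser M) (m L e a b c : ℤ) (v : M) : M :=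
  ∑ᶠ (i : ℕ) (j : ℕ) (s : ℕ),
    (msign m * (-1 : ℤ) ^ (i + j + s) * ichoose m i * ichoose L j * ichoose e s) •
      B (b + m - (i : ℤ) + L - (j : ℤ))
        (A (a + (i : ℤ) + e - (s : ℤ)) (C (c + (j : ℤ) + (s : ℤ)) v))

/-- Coefficient in `C(z)A(x)B(y) (x-y)^m (y-z)^L (x-z)^e`, expanded in `|z|>|x|>|y|`. -/
noncomputable def term3 (A B C : Ser M) (m L e a b c : ℤ) (v : M) : M :=
  ∑ᶠ (i : ℕ) (j : ℕ) (s : ℕ),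
    (msign (L + e) * (-1 : ℤ) ^ (i + j + s) * ichoose m i * ichoose L j * ichoose e s) •
      C (c + L - (j : ℤ) + e - (s : ℤ))
        (A (a + m - (i : ℤ) + (s : ℤ)) (B (b + (i : ℤ) + (j : ℤ)) v))

/-- Coefficient in `C(z)B(y)A(x) (x-y)^m (y-z)^L (x-z)^e`, expanded in `|z|>|y|>|x|`. -/
noncomputable def term4 (A B C : Ser M) (m L e a b c : ℤ) (v : M) : M :=
  ∑ᶠ (i : ℕ) (j : ℕ) (s : ℕ),
    (msign (m + L + e) * (-1 : ℤ) ^ (i + j + s) * ichoose m i * ichoose L j * ichoose e s) •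
      C (c + L - (j : ℤ) + e - (s : ℤ))
        (B (b + m - (i : ℤ) + (j : ℤ)) (A (a + (i : ℤ) + (s : ℤ)) v))

lemma ichoose_zero (n : ℤ) : ichoose n 0 = 1 := by
  unfold ichoose; split <;> simp

lemma ichoose_succ (n : ℤ) (i : ℕ) :
    ichoose (n + 1) (i + 1) = ichoose n (i + 1) + ichoose n i := by
  rcases le_or_gt 0 n with hn | hn
  · have h1 : (0:ℤ) ≤ n + 1 := by omega
    have h2 : (n+1).toNat = n.toNat + 1 := by omega
    simp only [ichoose, if_pos hn, if_pos h1, h2]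
    rw [Nat.choose_succ_succ]
    push_cast; ring
  · rcases eq_or_lt_of_le (by omega : n ≤ -1) with h1 | h1
    · have hne : n = -1 := by omega
      subst hne
      norm_num [ichoose]
      rw [pow_succ]; ring
    · have h2 : ¬ (0:ℤ) ≤ n := by omega
      have h3 : ¬ (0:ℤ) ≤ n + 1 := by omega
      simp only [ichoose, if_neg h2, if_neg h3]
      push_cast
      have e1 : ((i:ℤ) + 1 - 1 - (n+1)).toNat = ((i:ℤ) - 1 - n).toNat := by omega
      have e2 : ((i:ℤ) + 1 - 1 - n).toNat = ((i:ℤ) - 1 - n).toNat + 1 := by omega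
      rw [e1, e2]
      set t := ((i:ℤ) - 1 - n).toNat with ht
      rw [Nat.choose_succ_succ]
      push_cast [pow_succ]
      ring

lemma ichoose_nonneg (n : ℤ) (hn : 0 ≤ n) (i : ℕ) :
    ichoose n i = (n.toNat.choose i : ℤ) := by simp [ichoose, hn]

lemma ichoose_eq_zero (n : ℤ) (hn : 0 ≤ n) (i : ℕ) (hi : n.toNat < i) :
    ichoose n i = 0 := by
  simp [ichoose, hn, Nat.choose_eq_zero_of_lt hi]

lemma msign_add (x y : ℤ) : msign (x + y) = msign x * msign y := by
  unfold msign
  by_cases hx : Even x <;> by_cases hy : Even y <;>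
    simp [hx, hy, Int.even_add]

lemma msign_natCast (n : ℕ) : msign (n : ℤ) = (-1 : ℤ) ^ n := by
  unfold msign
  by_cases h : Even n
  · simp [h.neg_one_pow, Int.even_coe_nat, h]
  · rw [if_neg (by simpa [Int.even_coe_nat] using h)]
    rw [(Nat.not_even_iff_odd.1 h).neg_one_pow]

lemma msign_mul_self (x : ℤ) : msign x * msign x = 1 := by
  unfold msign; split <;> norm_num

lemma finsum_box (g : ℕ → ℕ → ℕ → M) (N : ℕ)
    (h : ∀ i j s, N ≤ i ∨ N ≤ j ∨ N ≤ s → g i j s = 0) :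
    (∑ᶠ (i : ℕ) (j : ℕ) (s : ℕ), g i j s)
      = ∑ i ∈ range N, ∑ j ∈ range N, ∑ s ∈ range N, g i j s := by
  have h3 : ∀ i j, (∑ᶠ s : ℕ, g i j s) = ∑ s ∈ range N, g i j s := fun i j =>
    finsum_eq_finset_sum_of_support_subset _ (fun s hs => by
      simp only [Function.mem_support] at hs
      simp only [coe_range, Set.mem_Iio]
      by_contra hmem
      exact hs (h _ _ _ (Or.inr (Or.inr (not_lt.1 hmem)))))
  have h2 : ∀ i, (∑ᶠ (j : ℕ) (s : ℕ), g i j s) = ∑ j ∈ range N, ∑ s ∈ range N, g i j s := by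
    intro i
    rw [show (∑ᶠ (j : ℕ) (s : ℕ), g i j s) = ∑ᶠ (j : ℕ), ∑ s ∈ range N, g i j s by
      congr 1; ext j; exact h3 i j]
    refine finsum_eq_finset_sum_of_support_subset _ (fun j hj => ?_)
    simp only [Function.mem_support] at hj
    simp only [coe_range, Set.mem_Iio]
    by_contra hmem
    exact hj (Finset.sum_eq_zero fun s _ => h _ _ _ (Or.inr (Or.inl (not_lt.1 hmem))))
  rw [show (∑ᶠ (i : ℕ) (j : ℕ) (s : ℕ), g i j s) = ∑ᶠ (i : ℕ), ∑ j ∈ range N, ∑ s ∈ range N, g i j s by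
    congr 1; ext i; exact h2 i]
  refine finsum_eq_finset_sum_of_support_subset _ (fun i hi => ?_)
  simp only [Function.mem_support] at hi
  simp only [coe_range, Set.mem_Iio]
  by_contra hmem
  exact hi (Finset.sum_eq_zero fun j _ => Finset.sum_eq_zero fun s _ =>
    h _ _ _ (Or.inl (not_lt.1 hmem)))
lemma linzero {P : Ser M} (hP : IsLinSer (k := k) P) (n : ℤ) : P n 0 = 0 := by
  simpa using (hP n).map_smul (0 : k) 0

/-- The summand of `term1`. -/
noncomputable def t1g (P Q R : Ser M) (m L e a b c : ℤ) (v : M) (i j s : ℕ) : M :=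
  ((-1 : ℤ) ^ (i + j + s) * ichoose m i * ichoose L j * ichoose e s) •
    P (a + m - (i : ℤ) + e - (s : ℤ))
      (Q (b + (i : ℤ) + L - (j : ℤ)) (R (c + (j : ℤ) + (s : ℤ)) v))

lemma term1_def (P Q R : Ser M) (m L e a b c : ℤ) (v : M) :
    term1 P Q R m L e a b c v = ∑ᶠ (i : ℕ) (j : ℕ) (s : ℕ), t1g P Q R m L e a b c v i j s := rfl

lemma box_t1 (P Q R : Ser M) (hP0 : ∀ n, P n 0 = 0) (hQ0 : ∀ n, Q n 0 = 0)
    (hQ : IsFieldSer Q) (hR : IsFieldSer R) (m L e a b c : ℤ) (v : M) :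
    ∃ N : ℕ, ∀ i j s : ℕ, N ≤ i ∨ N ≤ j ∨ N ≤ s → t1g P Q R m L e a b c v i j s = 0 := by
  obtain ⟨nR, hnR⟩ := hR v
  choose bq hbq using hQ
  set K : ℕ := (nR - c).toNat + 1 with hK
  have hKge : nR - c < (K : ℤ) := by rw [hK]; push_cast; omega
  set NI : ℕ := (Finset.range K ×ˢ Finset.range K).sup
      (fun p => (bq (R (c + (p.1 : ℤ) + (p.2 : ℤ)) v) + (p.1 : ℤ) - b - L).toNat) with hNI
  refine ⟨max K (NI + 1), fun i j s h => ?_⟩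
  have hzR : ∀ j s : ℕ, K ≤ j ∨ K ≤ s → R (c + (j : ℤ) + (s : ℤ)) v = 0 := by
    intro j s hjs
    apply hnR
    omega
  rcases le_or_gt K j with hj | hj
  · unfold t1g; rw [hzR j s (Or.inl hj), hQ0, hP0, smul_zero]
  rcases le_or_gt K s with hs | hs
  · unfold t1g; rw [hzR j s (Or.inr hs), hQ0, hP0, smul_zero]
  have hi : NI + 1 ≤ i := by
    rcases h with h | h | h
    · omega
    · omega
    · omega
  have hmem : ((j, s) : ℕ × ℕ) ∈ Finset.range K ×ˢ Finset.range K := by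
    simp [Finset.mem_product, hj, hs]
  have hle := Finset.le_sup (f := fun p : ℕ × ℕ =>
    (bq (R (c + (p.1 : ℤ) + (p.2 : ℤ)) v) + (p.1 : ℤ) - b - L).toNat) hmem
  simp only at hle
  have hile : bq (R (c + (j : ℤ) + (s : ℤ)) v) ≤ b + (i : ℤ) + L - (j : ℤ) := by omega
  unfold t1g
  rw [hbq _ _ hile, hP0, smul_zero]

lemma term1_eq_sum (P Q R : Ser M) (m L e a b c : ℤ) (v : M) (N : ℕ)
    (h : ∀ i j s : ℕ, N ≤ i ∨ N ≤ j ∨ N ≤ s → t1g P Q R m L e a b c v i j s = 0) :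
    term1 P Q R m L e a b c v
      = ∑ i ∈ range N, ∑ j ∈ range N, ∑ s ∈ range N, t1g P Q R m L e a b c v i j s := by
  rw [term1_def]; exact finsum_box _ N h
lemma pascal_m (P Q R : Ser M) (hP0 : ∀ n, P n 0 = 0) (hQ0 : ∀ n, Q n 0 = 0)
    (hQ : IsFieldSer Q) (hR : IsFieldSer R) (m L e a b c : ℤ) (v : M) :
    term1 P Q R (m+1) L e a b c v
      = term1 P Q R m L e (a+1) b c v - term1 P Q R m L e a (b+1) c v := by
  obtain ⟨N₁, h₁⟩ := box_t1 P Q R hP0 hQ0 hQ hR (m+1) L e a b c v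
  obtain ⟨N₂, h₂⟩ := box_t1 P Q R hP0 hQ0 hQ hR m L e (a+1) b c v
  obtain ⟨N₃, h₃⟩ := box_t1 P Q R hP0 hQ0 hQ hR m L e a (b+1) c v
  set N := max (max N₁ N₂) N₃ with hN
  rw [term1_eq_sum P Q R (m+1) L e a b c v (N+1) (fun i j s hc => h₁ i j s (by omega)),
      term1_eq_sum P Q R m L e (a+1) b c v (N+1) (fun i j s hc => h₂ i j s (by omega)),
      term1_eq_sum P Q R m L e a (b+1) c v (N+1) (fun i j s hc => h₃ i j s (by omega))]
  rw [Finset.sum_range_succ'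
    (fun i => ∑ j ∈ range (N+1), ∑ s ∈ range (N+1), t1g P Q R (m+1) L e a b c v i j s) N]
  rw [Finset.sum_range_succ'
    (fun i => ∑ j ∈ range (N+1), ∑ s ∈ range (N+1), t1g P Q R m L e (a+1) b c v i j s) N]
  rw [Finset.sum_range_succ
    (fun i => ∑ j ∈ range (N+1), ∑ s ∈ range (N+1), t1g P Q R m L e a (b+1) c v i j s) N]
  have hHN : (∑ j ∈ range (N+1), ∑ s ∈ range (N+1), t1g P Q R m L e a (b+1) c v N j s) = 0 :=
    Finset.sum_eq_zero fun j _ => Finset.sum_eq_zero fun s _ => h₃ N j s (by omega)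
  rw [hHN, add_zero]
  have hF0 : (∑ j ∈ range (N+1), ∑ s ∈ range (N+1), t1g P Q R (m+1) L e a b c v 0 j s)
      = ∑ j ∈ range (N+1), ∑ s ∈ range (N+1), t1g P Q R m L e (a+1) b c v 0 j s := by
    refine Finset.sum_congr rfl fun j _ => Finset.sum_congr rfl fun s _ => ?_
    simp only [t1g, ichoose_zero]
    push_cast
    ring_nf
  have key : ∀ i ∈ range N,
      (∑ j ∈ range (N+1), ∑ s ∈ range (N+1), t1g P Q R (m+1) L e a b c v (i+1) j s)
        = (∑ j ∈ range (N+1), ∑ s ∈ range (N+1), t1g P Q R m L e (a+1) b c v (i+1) j s)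
          - ∑ j ∈ range (N+1), ∑ s ∈ range (N+1), t1g P Q R m L e a (b+1) c v i j s := by
    intro i _
    rw [← Finset.sum_sub_distrib]
    refine Finset.sum_congr rfl fun j _ => ?_
    rw [← Finset.sum_sub_distrib]
    refine Finset.sum_congr rfl fun s _ => ?_
    simp only [t1g]
    rw [ichoose_succ]
    push_cast
    ring_nf
    module
  rw [Finset.sum_congr rfl key, Finset.sum_sub_distrib, hF0]
  abel
lemma pascal_L (P Q R : Ser M) (hP0 : ∀ n, P n 0 = 0) (hQ0 : ∀ n, Q n 0 = 0)
    (hQ : IsFieldSer Q) (hR : IsFieldSer R) (m L e a b c : ℤ) (v : M) :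
    term1 P Q R m (L+1) e a b c v
      = term1 P Q R m L e a (b+1) c v - term1 P Q R m L e a b (c+1) v := by
  obtain ⟨N₁, h₁⟩ := box_t1 P Q R hP0 hQ0 hQ hR m (L+1) e a b c v
  obtain ⟨N₂, h₂⟩ := box_t1 P Q R hP0 hQ0 hQ hR m L e a (b+1) c v
  obtain ⟨N₃, h₃⟩ := box_t1 P Q R hP0 hQ0 hQ hR m L e a b (c+1) v
  set N := max (max N₁ N₂) N₃ with hN
  rw [term1_eq_sum P Q R m (L+1) e a b c v (N+1) (fun i j s hc => h₁ i j s (by omega)),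
      term1_eq_sum P Q R m L e a (b+1) c v (N+1) (fun i j s hc => h₂ i j s (by omega)),
      term1_eq_sum P Q R m L e a b (c+1) v (N+1) (fun i j s hc => h₃ i j s (by omega)),
      ← Finset.sum_sub_distrib]
  refine Finset.sum_congr rfl fun i _ => ?_
  rw [Finset.sum_range_succ'
    (fun j => ∑ s ∈ range (N+1), t1g P Q R m (L+1) e a b c v i j s) N]
  rw [Finset.sum_range_succ'
    (fun j => ∑ s ∈ range (N+1), t1g P Q R m L e a (b+1) c v i j s) N]
  rw [Finset.sum_range_succ
    (fun j => ∑ s ∈ range (N+1), t1g P Q R m L e a b (c+1) v i j s) N]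
  have hHN : (∑ s ∈ range (N+1), t1g P Q R m L e a b (c+1) v i N s) = 0 :=
    Finset.sum_eq_zero fun s _ => h₃ i N s (by omega)
  rw [hHN, add_zero]
  have hF0 : (∑ s ∈ range (N+1), t1g P Q R m (L+1) e a b c v i 0 s)
      = ∑ s ∈ range (N+1), t1g P Q R m L e a (b+1) c v i 0 s := by
    refine Finset.sum_congr rfl fun s _ => ?_
    simp only [t1g, ichoose_zero]
    push_cast
    ring_nf
  have key : ∀ j ∈ range N,
      (∑ s ∈ range (N+1), t1g P Q R m (L+1) e a b c v i (j+1) s)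
        = (∑ s ∈ range (N+1), t1g P Q R m L e a (b+1) c v i (j+1) s)
          - ∑ s ∈ range (N+1), t1g P Q R m L e a b (c+1) v i j s := by
    intro j _
    rw [← Finset.sum_sub_distrib]
    refine Finset.sum_congr rfl fun s _ => ?_
    simp only [t1g]
    rw [ichoose_succ]
    push_cast
    ring_nf
    module
  rw [Finset.sum_congr rfl key, Finset.sum_sub_distrib, hF0]
  abel

lemma pascal_e (P Q R : Ser M) (hP0 : ∀ n, P n 0 = 0) (hQ0 : ∀ n, Q n 0 = 0)
    (hQ : IsFieldSer Q) (hR : IsFieldSer R) (m L e a b c : ℤ) (v : M) :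
    term1 P Q R m L (e+1) a b c v
      = term1 P Q R m L e (a+1) b c v - term1 P Q R m L e a b (c+1) v := by
  obtain ⟨N₁, h₁⟩ := box_t1 P Q R hP0 hQ0 hQ hR m L (e+1) a b c v
  obtain ⟨N₂, h₂⟩ := box_t1 P Q R hP0 hQ0 hQ hR m L e (a+1) b c v
  obtain ⟨N₃, h₃⟩ := box_t1 P Q R hP0 hQ0 hQ hR m L e a b (c+1) v
  set N := max (max N₁ N₂) N₃ with hN
  rw [term1_eq_sum P Q R m L (e+1) a b c v (N+1) (fun i j s hc => h₁ i j s (by omega)),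
      term1_eq_sum P Q R m L e (a+1) b c v (N+1) (fun i j s hc => h₂ i j s (by omega)),
      term1_eq_sum P Q R m L e a b (c+1) v (N+1) (fun i j s hc => h₃ i j s (by omega)),
      ← Finset.sum_sub_distrib]
  refine Finset.sum_congr rfl fun i _ => ?_
  rw [← Finset.sum_sub_distrib]
  refine Finset.sum_congr rfl fun j _ => ?_
  rw [Finset.sum_range_succ'
    (fun s => t1g P Q R m L (e+1) a b c v i j s) N]
  rw [Finset.sum_range_succ'
    (fun s => t1g P Q R m L e (a+1) b c v i j s) N]
  rw [Finset.sum_range_succ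
    (fun s => t1g P Q R m L e a b (c+1) v i j s) N]
  have hHN : t1g P Q R m L e a b (c+1) v i j N = 0 := h₃ i j N (by omega)
  rw [hHN, add_zero]
  have hF0 : t1g P Q R m L (e+1) a b c v i j 0 = t1g P Q R m L e (a+1) b c v i j 0 := by
    simp only [t1g, ichoose_zero]
    push_cast
    ring_nf
  have key : ∀ s ∈ range N,
      t1g P Q R m L (e+1) a b c v i j (s+1)
        = t1g P Q R m L e (a+1) b c v i j (s+1) - t1g P Q R m L e a b (c+1) v i j s := by
    intro s _
    simp only [t1g]
    rw [ichoose_succ]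
    push_cast
    ring_nf
    module
  rw [Finset.sum_congr rfl key, Finset.sum_sub_distrib, hF0]
  abel
lemma isLocalAt_succ {A B : Ser M} {n : ℕ} (h : IsLocalAt A B n) : IsLocalAt A B (n + 1) := by
  intro p q v
  set T : ℕ → M := fun i => A (p + ((n + 1 : ℕ) : ℤ) - i) (B (q + i) v)
      - ((-1 : ℤ)) ^ (n + 1) • B (q + ((n + 1 : ℕ) : ℤ) - i) (A (p + i) v) with hT
  show (∑ i ∈ Finset.range (n + 1 + 1), ((-1 : ℤ) ^ i * ((n + 1).choose i : ℤ)) • T i) = 0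
  set c₁ : ℕ → M := fun i => ((-1 : ℤ) ^ i * (n.choose i : ℤ)) • T i with hc₁
  set d₂ : ℕ → M := fun i => ((-1 : ℤ) ^ (i + 1) * (n.choose i : ℤ)) • T (i + 1) with hd₂
  have e1 : (∑ i ∈ Finset.range (n + 1 + 1), ((-1 : ℤ) ^ i * ((n + 1).choose i : ℤ)) • T i)
      = (∑ i ∈ Finset.range (n + 1 + 1), c₁ i) + ∑ i ∈ Finset.range (n + 1), d₂ i := by
    rw [Finset.sum_range_succ' (fun i => ((-1 : ℤ) ^ i * ((n + 1).choose i : ℤ)) • T i) (n + 1),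
        Finset.sum_range_succ' c₁ (n + 1)]
    have hkey : ∀ i ∈ Finset.range (n + 1),
        ((-1 : ℤ) ^ (i + 1) * ((n + 1).choose (i + 1) : ℤ)) • T (i + 1) = c₁ (i + 1) + d₂ i := by
      intro i _
      rw [hc₁, hd₂]
      simp only
      rw [Nat.choose_succ_succ]
      push_cast
      module
    rw [Finset.sum_congr rfl hkey, Finset.sum_add_distrib]
    have h0 : ((-1 : ℤ) ^ 0 * ((n + 1).choose 0 : ℤ)) • T 0 = c₁ 0 := by
      rw [hc₁]; simp
    rw [h0]
    abel
  rw [e1]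
  have e2 : (∑ i ∈ Finset.range (n + 1 + 1), c₁ i) = ∑ i ∈ Finset.range (n + 1), c₁ i := by
    rw [Finset.sum_range_succ]
    have hz : c₁ (n + 1) = 0 := by
      rw [hc₁]; simp only
      rw [Nat.choose_eq_zero_of_lt (by omega)]
      simp
    rw [hz, add_zero]
  rw [e2, ← Finset.sum_add_distrib]
  have e3 : ∀ i ∈ Finset.range (n + 1), c₁ i + d₂ i
      = ((-1 : ℤ) ^ i * (n.choose i : ℤ)) •
          (A ((p + 1) + (n : ℤ) - i) (B (q + i) v)
            - (-1 : ℤ) ^ n • B (q + (n : ℤ) - i) (A ((p + 1) + i) v))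
        - ((-1 : ℤ) ^ i * (n.choose i : ℤ)) •
          (A (p + (n : ℤ) - i) (B ((q + 1) + i) v)
            - (-1 : ℤ) ^ n • B ((q + 1) + (n : ℤ) - i) (A (p + i) v)) := by
    intro i _
    rw [hc₁, hd₂, hT]
    simp only
    push_cast
    ring_nf
    module
  rw [Finset.sum_congr rfl e3, Finset.sum_sub_distrib]
  rw [h (p + 1) q v, h p (q + 1) v, sub_zero]

lemma isLocalAt_of_le {A B : Ser M} {n₀ n : ℕ} (h : IsLocalAt A B n₀) (hn : n₀ ≤ n) :
    IsLocalAt A B n := by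
  induction n with
  | zero => simpa [Nat.le_zero.1 hn] using h
  | succ n ih =>
    rcases Nat.lt_or_ge n₀ (n + 1) with h1 | h1
    · exact isLocalAt_succ (ih (by omega))
    · have : n₀ = n + 1 := by omega
      subst this; exact h
lemma choose_ext_sum (n N : ℕ) (hN : n + 1 ≤ N) (F : ℕ → M) :
    ∑ i ∈ range N, ((-1 : ℤ) ^ i * (n.choose i : ℤ)) • F i
      = ∑ i ∈ range (n + 1), ((-1 : ℤ) ^ i * (n.choose i : ℤ)) • F i := by
  symm
  apply Finset.sum_subset
  · intro x hx; simp only [Finset.mem_range] at *; omega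
  · intro x _ hx
    simp only [Finset.mem_range, not_lt] at hx
    rw [Nat.choose_eq_zero_of_lt (by omega)]
    simp

lemma swap_outer (P Q R : Ser M) (hP0 : ∀ n, P n 0 = 0) (hQ0 : ∀ n, Q n 0 = 0)
    (hP : IsFieldSer P) (hQ : IsFieldSer Q) (hR : IsFieldSer R)
    (m L e a b c : ℤ) (hm : 0 ≤ m) (hloc : IsLocalAt P Q m.toNat) (v : M) :
    term1 P Q R m L e a b c v = msign m • term1 Q P R m e L b a c v := by
  obtain ⟨N₁, h₁⟩ := box_t1 P Q R hP0 hQ0 hQ hR m L e a b c v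
  obtain ⟨N₂, h₂⟩ := box_t1 Q P R hQ0 hP0 hP hR m e L b a c v
  set n := m.toNat with hn
  have hmn : m = (n : ℤ) := by omega
  set N := max (max N₁ N₂) (n + 1) with hN
  have hNn : n + 1 ≤ N := by omega
  rw [term1_eq_sum P Q R m L e a b c v N (fun i j s hc => h₁ i j s (by omega)),
      term1_eq_sum Q P R m e L b a c v N (fun i j s hc => h₂ i j s (by omega))]
  simp only [Finset.smul_sum]
  -- reorder LHS : i,j,s → j,s,i
  rw [show (∑ i ∈ range N, ∑ j ∈ range N, ∑ s ∈ range N, t1g P Q R m L e a b c v i j s)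
      = ∑ j ∈ range N, ∑ s ∈ range N, ∑ i ∈ range N, t1g P Q R m L e a b c v i j s by
    rw [Finset.sum_comm]
    exact Finset.sum_congr rfl fun j _ => Finset.sum_comm]
  -- reorder RHS : i,j,s → s,j,i
  rw [show (∑ i ∈ range N, ∑ j ∈ range N, ∑ s ∈ range N,
        msign m • t1g Q P R m e L b a c v i j s)
      = ∑ s ∈ range N, ∑ j ∈ range N, ∑ i ∈ range N,
        msign m • t1g Q P R m e L b a c v i j s by
    rw [show (∑ i ∈ range N, ∑ j ∈ range N, ∑ s ∈ range N,
        msign m • t1g Q P R m e L b a c v i j s)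
      = ∑ j ∈ range N, ∑ s ∈ range N, ∑ i ∈ range N,
        msign m • t1g Q P R m e L b a c v i j s by
      rw [Finset.sum_comm]
      exact Finset.sum_congr rfl fun j _ => Finset.sum_comm]
    exact Finset.sum_comm]
  refine Finset.sum_congr rfl fun x hx => Finset.sum_congr rfl fun y hy => ?_
  -- fixed outer indices x (= j of LHS, s of RHS), y (= s of LHS, j of RHS)
  calc (∑ i ∈ range N, t1g P Q R m L e a b c v i x y)
      = ∑ i ∈ range N, ((-1 : ℤ) ^ (x + y) * ichoose L x * ichoose e y) •
          (((-1 : ℤ) ^ i * (n.choose i : ℤ)) •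
            P (a + e - (y : ℤ) + n - i) (Q (b + L - (x : ℤ) + i) (R (c + (x : ℤ) + y) v))) := by
        refine Finset.sum_congr rfl fun i _ => ?_
        simp only [t1g]
        rw [hmn, ichoose_nonneg _ (by positivity) i, Int.toNat_natCast]
        push_cast
        ring_nf
        module
    _ = ((-1 : ℤ) ^ (x + y) * ichoose L x * ichoose e y) •
          ∑ i ∈ range N, (((-1 : ℤ) ^ i * (n.choose i : ℤ)) •
            P (a + e - (y : ℤ) + n - i) (Q (b + L - (x : ℤ) + i) (R (c + (x : ℤ) + y) v))) := by
        rw [Finset.smul_sum]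
    _ = ((-1 : ℤ) ^ (x + y) * ichoose L x * ichoose e y) •
          ∑ i ∈ range N, (((-1 : ℤ) ^ i * (n.choose i : ℤ)) •
            ((-1 : ℤ) ^ n • Q (b + L - (x : ℤ) + n - i)
              (P (a + e - (y : ℤ) + i) (R (c + (x : ℤ) + y) v)))) := by
        rw [choose_ext_sum n N hNn, choose_ext_sum n N hNn]
        congr 1
        have hl := hloc (a + e - (y : ℤ)) (b + L - (x : ℤ)) (R (c + (x : ℤ) + y) v)
        simp only [smul_sub, Finset.sum_sub_distrib] at hl
        exact sub_eq_zero.mp hl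
    _ = ∑ i ∈ range N, msign m • t1g Q P R m e L b a c v i y x := by
        rw [Finset.smul_sum]
        refine Finset.sum_congr rfl fun i _ => ?_
        simp only [t1g]
        rw [hmn, msign_natCast, ichoose_nonneg _ (by positivity) i, Int.toNat_natCast]
        push_cast
        ring_nf
        module
lemma swap_inner (P Q R : Ser M) (hP0 : ∀ n, P n 0 = 0) (hQ0 : ∀ n, Q n 0 = 0)
    (hR0 : ∀ n, R n 0 = 0) (hlP : IsLinSer (k := k) P)
    (hQ : IsFieldSer Q) (hR : IsFieldSer R)
    (m L e a b c : ℤ) (hL : 0 ≤ L) (hloc : IsLocalAt Q R L.toNat) (v : M) :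
    term1 P Q R m L e a b c v = msign L • term1 P R Q e L m a c b v := by
  obtain ⟨N₁, h₁⟩ := box_t1 P Q R hP0 hQ0 hQ hR m L e a b c v
  obtain ⟨N₂, h₂⟩ := box_t1 P R Q hP0 hR0 hR hQ e L m a c b v
  set n := L.toNat with hn
  have hLn : L = (n : ℤ) := by omega
  set N := max (max N₁ N₂) (n + 1) with hN
  have hNn : n + 1 ≤ N := by omega
  rw [term1_eq_sum P Q R m L e a b c v N (fun i j s hc => h₁ i j s (by omega)),
      term1_eq_sum P R Q e L m a c b v N (fun i j s hc => h₂ i j s (by omega))]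
  simp only [Finset.smul_sum]
  -- reorder LHS : i,j,s → i,s,j
  rw [show (∑ i ∈ range N, ∑ j ∈ range N, ∑ s ∈ range N, t1g P Q R m L e a b c v i j s)
      = ∑ i ∈ range N, ∑ s ∈ range N, ∑ j ∈ range N, t1g P Q R m L e a b c v i j s by
    exact Finset.sum_congr rfl fun i _ => Finset.sum_comm]
  -- reorder RHS : i,j,s → s,i,j
  rw [show (∑ i ∈ range N, ∑ j ∈ range N, ∑ s ∈ range N,
        msign L • t1g P R Q e L m a c b v i j s)
      = ∑ s ∈ range N, ∑ i ∈ range N, ∑ j ∈ range N,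
        msign L • t1g P R Q e L m a c b v i j s by
    rw [show (∑ i ∈ range N, ∑ j ∈ range N, ∑ s ∈ range N,
        msign L • t1g P R Q e L m a c b v i j s)
      = ∑ i ∈ range N, ∑ s ∈ range N, ∑ j ∈ range N,
        msign L • t1g P R Q e L m a c b v i j s from
      Finset.sum_congr rfl fun i _ => Finset.sum_comm]
    exact Finset.sum_comm]
  refine Finset.sum_congr rfl fun x hx => Finset.sum_congr rfl fun y hy => ?_
  -- x = i of LHS (= s' of RHS), y = s of LHS (= i' of RHS); inner sum over j
  set f : M →ₗ[k] M := IsLinearMap.mk' (P (a + m - (x : ℤ) + e - (y : ℤ)))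
    (hlP (a + m - (x : ℤ) + e - (y : ℤ))) with hf
  have mid : (∑ j ∈ range N, ((-1 : ℤ) ^ j * (n.choose j : ℤ)) •
        Q (b + (x : ℤ) + (n : ℤ) - j) (R (c + (y : ℤ) + j) v))
      = ∑ j ∈ range N, ((-1 : ℤ) ^ j * (n.choose j : ℤ)) •
        ((-1 : ℤ) ^ n • R (c + (y : ℤ) + (n : ℤ) - j) (Q (b + (x : ℤ) + j) v)) := by
    rw [choose_ext_sum n N hNn, choose_ext_sum n N hNn]
    have hl := hloc (b + (x : ℤ)) (c + (y : ℤ)) v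
    simp only [smul_sub, Finset.sum_sub_distrib] at hl
    exact sub_eq_zero.mp hl
  have mid2 : (∑ j ∈ range N, ((-1 : ℤ) ^ j * (n.choose j : ℤ)) •
        f (Q (b + (x : ℤ) + (n : ℤ) - j) (R (c + (y : ℤ) + j) v)))
      = ∑ j ∈ range N, ((-1 : ℤ) ^ j * (n.choose j : ℤ)) •
        ((-1 : ℤ) ^ n • f (R (c + (y : ℤ) + (n : ℤ) - j) (Q (b + (x : ℤ) + j) v))) := by
    calc (∑ j ∈ range N, ((-1 : ℤ) ^ j * (n.choose j : ℤ)) •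
          f (Q (b + (x : ℤ) + (n : ℤ) - j) (R (c + (y : ℤ) + j) v)))
        = ∑ j ∈ range N, f (((-1 : ℤ) ^ j * (n.choose j : ℤ)) •
            Q (b + (x : ℤ) + (n : ℤ) - j) (R (c + (y : ℤ) + j) v)) :=
          Finset.sum_congr rfl fun j _ => (map_zsmul f _ _).symm
      _ = f (∑ j ∈ range N, ((-1 : ℤ) ^ j * (n.choose j : ℤ)) •
            Q (b + (x : ℤ) + (n : ℤ) - j) (R (c + (y : ℤ) + j) v)) := (map_sum f _ _).symm
      _ = f (∑ j ∈ range N, ((-1 : ℤ) ^ j * (n.choose j : ℤ)) •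
            ((-1 : ℤ) ^ n • R (c + (y : ℤ) + (n : ℤ) - j) (Q (b + (x : ℤ) + j) v))) := by
          rw [mid]
      _ = ∑ j ∈ range N, f (((-1 : ℤ) ^ j * (n.choose j : ℤ)) •
            ((-1 : ℤ) ^ n • R (c + (y : ℤ) + (n : ℤ) - j) (Q (b + (x : ℤ) + j) v))) :=
          map_sum f _ _
      _ = ∑ j ∈ range N, ((-1 : ℤ) ^ j * (n.choose j : ℤ)) •
            ((-1 : ℤ) ^ n • f (R (c + (y : ℤ) + (n : ℤ) - j) (Q (b + (x : ℤ) + j) v))) := by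
          refine Finset.sum_congr rfl fun j _ => ?_
          rw [map_zsmul, map_zsmul]
  calc (∑ j ∈ range N, t1g P Q R m L e a b c v x j y)
      = ∑ j ∈ range N, ((-1 : ℤ) ^ (x + y) * ichoose m x * ichoose e y) •
          (((-1 : ℤ) ^ j * (n.choose j : ℤ)) •
            f (Q (b + (x : ℤ) + (n : ℤ) - j) (R (c + (y : ℤ) + j) v))) := by
        refine Finset.sum_congr rfl fun j _ => ?_
        simp only [t1g, hf, IsLinearMap.mk'_apply]
        rw [hLn, ichoose_nonneg _ (by positivity) j, Int.toNat_natCast]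
        ring_nf
        module
    _ = ((-1 : ℤ) ^ (x + y) * ichoose m x * ichoose e y) •
          ∑ j ∈ range N, (((-1 : ℤ) ^ j * (n.choose j : ℤ)) •
            f (Q (b + (x : ℤ) + (n : ℤ) - j) (R (c + (y : ℤ) + j) v))) := (Finset.smul_sum).symm
    _ = ((-1 : ℤ) ^ (x + y) * ichoose m x * ichoose e y) •
          ∑ j ∈ range N, (((-1 : ℤ) ^ j * (n.choose j : ℤ)) •
            ((-1 : ℤ) ^ n • f (R (c + (y : ℤ) + (n : ℤ) - j) (Q (b + (x : ℤ) + j) v)))) := by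
        rw [mid2]
    _ = ∑ j ∈ range N, ((-1 : ℤ) ^ (x + y) * ichoose m x * ichoose e y) •
          (((-1 : ℤ) ^ j * (n.choose j : ℤ)) •
            ((-1 : ℤ) ^ n • f (R (c + (y : ℤ) + (n : ℤ) - j) (Q (b + (x : ℤ) + j) v)))) :=
        Finset.smul_sum
    _ = ∑ j ∈ range N, msign L • t1g P R Q e L m a c b v y j x := by
        refine Finset.sum_congr rfl fun j _ => ?_
        simp only [t1g, hf, IsLinearMap.mk'_apply]
        rw [hLn, msign_natCast, ichoose_nonneg _ (by positivity) j, Int.toNat_natCast]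
        ring_nf
        module
lemma term2_eq (A B C : Ser M) (hA0 : ∀ n, A n 0 = 0) (hB0 : ∀ n, B n 0 = 0)
    (hA : IsFieldSer A) (hC : IsFieldSer C) (m L e a b c : ℤ) (v : M) :
    term2 A B C m L e a b c v = msign m • term1 B A C m e L b a c v := by
  obtain ⟨N, hN⟩ := box_t1 B A C hB0 hA0 hA hC m e L b a c v
  have hpt : ∀ i j s : ℕ,
      (msign m * (-1 : ℤ) ^ (i + j + s) * ichoose m i * ichoose L j * ichoose e s) •
        B (b + m - (i : ℤ) + L - (j : ℤ))
          (A (a + (i : ℤ) + e - (s : ℤ)) (C (c + (j : ℤ) + (s : ℤ)) v))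
      = msign m • t1g B A C m e L b a c v i s j := by
    intro i j s
    simp only [t1g]
    ring_nf
    module
  calc term2 A B C m L e a b c v
      = ∑ i ∈ range N, ∑ j ∈ range N, ∑ s ∈ range N,
          (msign m * (-1 : ℤ) ^ (i + j + s) * ichoose m i * ichoose L j * ichoose e s) •
            B (b + m - (i : ℤ) + L - (j : ℤ))
              (A (a + (i : ℤ) + e - (s : ℤ)) (C (c + (j : ℤ) + (s : ℤ)) v)) := by
        refine finsum_box _ N fun i j s h => ?_
        rw [hpt, hN i s j (by tauto)]
        simp
    _ = ∑ i ∈ range N, ∑ j ∈ range N, ∑ s ∈ range N, msign m • t1g B A C m e L b a c v i s j :=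
        Finset.sum_congr rfl fun i _ => Finset.sum_congr rfl fun j _ =>
          Finset.sum_congr rfl fun s _ => hpt i j s
    _ = ∑ i ∈ range N, ∑ j ∈ range N, ∑ s ∈ range N, msign m • t1g B A C m e L b a c v i j s :=
        Finset.sum_congr rfl fun i _ => Finset.sum_comm
    _ = msign m • ∑ i ∈ range N, ∑ j ∈ range N, ∑ s ∈ range N, t1g B A C m e L b a c v i j s := by
        simp only [Finset.smul_sum]
    _ = msign m • term1 B A C m e L b a c v := by
        rw [term1_eq_sum B A C m e L b a c v N hN]

lemma term3_eq (A B C : Ser M) (hA0 : ∀ n, A n 0 = 0) (hC0 : ∀ n, C n 0 = 0)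
    (hA : IsFieldSer A) (hB : IsFieldSer B) (m L e a b c : ℤ) (v : M) :
    term3 A B C m L e a b c v = msign (L + e) • term1 C A B e m L c a b v := by
  obtain ⟨N, hN⟩ := box_t1 C A B hC0 hA0 hA hB e m L c a b v
  have hpt : ∀ i j s : ℕ,
      (msign (L + e) * (-1 : ℤ) ^ (i + j + s) * ichoose m i * ichoose L j * ichoose e s) •
        C (c + L - (j : ℤ) + e - (s : ℤ))
          (A (a + m - (i : ℤ) + (s : ℤ)) (B (b + (i : ℤ) + (j : ℤ)) v))
      = msign (L + e) • t1g C A B e m L c a b v s i j := by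
    intro i j s
    simp only [t1g]
    ring_nf
    module
  calc term3 A B C m L e a b c v
      = ∑ i ∈ range N, ∑ j ∈ range N, ∑ s ∈ range N,
          (msign (L + e) * (-1 : ℤ) ^ (i + j + s) * ichoose m i * ichoose L j * ichoose e s) •
            C (c + L - (j : ℤ) + e - (s : ℤ))
              (A (a + m - (i : ℤ) + (s : ℤ)) (B (b + (i : ℤ) + (j : ℤ)) v)) := by
        refine finsum_box _ N fun i j s h => ?_
        rw [hpt, hN s i j (by tauto)]
        simp
    _ = ∑ i ∈ range N, ∑ j ∈ range N, ∑ s ∈ range N,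
          msign (L + e) • t1g C A B e m L c a b v s i j :=
        Finset.sum_congr rfl fun i _ => Finset.sum_congr rfl fun j _ =>
          Finset.sum_congr rfl fun s _ => hpt i j s
    _ = ∑ s ∈ range N, ∑ i ∈ range N, ∑ j ∈ range N,
          msign (L + e) • t1g C A B e m L c a b v s i j := by
        rw [show (∑ i ∈ range N, ∑ j ∈ range N, ∑ s ∈ range N,
            msign (L + e) • t1g C A B e m L c a b v s i j)
          = ∑ i ∈ range N, ∑ s ∈ range N, ∑ j ∈ range N,
            msign (L + e) • t1g C A B e m L c a b v s i j from
          Finset.sum_congr rfl fun i _ => Finset.sum_comm]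
        exact Finset.sum_comm
    _ = msign (L + e) • ∑ i ∈ range N, ∑ j ∈ range N, ∑ s ∈ range N,
          t1g C A B e m L c a b v i j s := by
        simp only [Finset.smul_sum]
    _ = msign (L + e) • term1 C A B e m L c a b v := by
        rw [term1_eq_sum C A B e m L c a b v N hN]

lemma term4_eq (A B C : Ser M) (hB0 : ∀ n, B n 0 = 0) (hC0 : ∀ n, C n 0 = 0)
    (hA : IsFieldSer A) (hB : IsFieldSer B) (m L e a b c : ℤ) (v : M) :
    term4 A B C m L e a b c v = msign (m + L + e) • term1 C B A L m e c b a v := by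
  obtain ⟨N, hN⟩ := box_t1 C B A hC0 hB0 hB hA L m e c b a v
  have hpt : ∀ i j s : ℕ,
      (msign (m + L + e) * (-1 : ℤ) ^ (i + j + s) * ichoose m i * ichoose L j * ichoose e s) •
        C (c + L - (j : ℤ) + e - (s : ℤ))
          (B (b + m - (i : ℤ) + (j : ℤ)) (A (a + (i : ℤ) + (s : ℤ)) v))
      = msign (m + L + e) • t1g C B A L m e c b a v j i s := by
    intro i j s
    simp only [t1g]
    ring_nf
    module
  calc term4 A B C m L e a b c v
      = ∑ i ∈ range N, ∑ j ∈ range N, ∑ s ∈ range N,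
          (msign (m + L + e) * (-1 : ℤ) ^ (i + j + s) * ichoose m i * ichoose L j * ichoose e s) •
            C (c + L - (j : ℤ) + e - (s : ℤ))
              (B (b + m - (i : ℤ) + (j : ℤ)) (A (a + (i : ℤ) + (s : ℤ)) v)) := by
        refine finsum_box _ N fun i j s h => ?_
        rw [hpt, hN j i s (by tauto)]
        simp
    _ = ∑ i ∈ range N, ∑ j ∈ range N, ∑ s ∈ range N,
          msign (m + L + e) • t1g C B A L m e c b a v j i s :=
        Finset.sum_congr rfl fun i _ => Finset.sum_congr rfl fun j _ =>
          Finset.sum_congr rfl fun s _ => hpt i j s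
    _ = ∑ j ∈ range N, ∑ i ∈ range N, ∑ s ∈ range N,
          msign (m + L + e) • t1g C B A L m e c b a v j i s := Finset.sum_comm
    _ = msign (m + L + e) • ∑ i ∈ range N, ∑ j ∈ range N, ∑ s ∈ range N,
          t1g C B A L m e c b a v i j s := by
        simp only [Finset.smul_sum]
    _ = msign (m + L + e) • term1 C B A L m e c b a v := by
        rw [term1_eq_sum C B A L m e c b a v N hN]
noncomputable def Dt (A B C : Ser M) (m L e a b c : ℤ) (v : M) : M :=
  term1 A B C m L e a b c v - term2 A B C m L e a b c v
    - (term3 A B C m L e a b c v - term4 A B C m L e a b c v)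

lemma msign_succ (x : ℤ) : msign (x + 1) = -msign x := by
  rw [msign_add]
  have : msign 1 = -1 := by norm_num [msign, Int.even_iff]
  rw [this]; ring

section Dpart

variable {A B C : Ser M}
variable (hA : IsFieldSer A) (hB : IsFieldSer B) (hC : IsFieldSer C)
  (hA0 : ∀ n, A n 0 = 0) (hB0 : ∀ n, B n 0 = 0) (hC0 : ∀ n, C n 0 = 0)

include hA hB hC hA0 hB0 hC0

lemma D_m (m L e a b c : ℤ) (v : M) :
    Dt A B C (m+1) L e a b c v
      = Dt A B C m L e (a+1) b c v - Dt A B C m L e a (b+1) c v := by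
  unfold Dt
  simp only [term2_eq A B C hA0 hB0 hA hC, term3_eq A B C hA0 hC0 hA hB,
    term4_eq A B C hB0 hC0 hA hB]
  rw [pascal_m A B C hA0 hB0 hB hC m L e a b c v,
      pascal_m B A C hB0 hA0 hA hC m e L b a c v,
      pascal_L C A B hC0 hA0 hA hB e m L c a b v,
      pascal_L C B A hC0 hB0 hB hA L m e c b a v,
      msign_succ m,
      show msign (m+1+L+e) = -msign (m+L+e) from by
        rw [show m+1+L+e = (m+L+e)+1 from by ring, msign_succ]]
  module

lemma D_L (m L e a b c : ℤ) (v : M) :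
    Dt A B C m (L+1) e a b c v
      = Dt A B C m L e a (b+1) c v - Dt A B C m L e a b (c+1) v := by
  unfold Dt
  simp only [term2_eq A B C hA0 hB0 hA hC, term3_eq A B C hA0 hC0 hA hB,
    term4_eq A B C hB0 hC0 hA hB]
  rw [pascal_L A B C hA0 hB0 hB hC m L e a b c v,
      pascal_e B A C hB0 hA0 hA hC m e L b a c v,
      pascal_e C A B hC0 hA0 hA hB e m L c a b v,
      pascal_m C B A hC0 hB0 hB hA L m e c b a v,
      show msign (L+1+e) = -msign (L+e) from by
        rw [show L+1+e = (L+e)+1 from by ring, msign_succ],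
      show msign (m+(L+1)+e) = -msign (m+L+e) from by
        rw [show m+(L+1)+e = (m+L+e)+1 from by ring, msign_succ]]
  module

lemma D_e (m L e a b c : ℤ) (v : M) :
    Dt A B C m L (e+1) a b c v
      = Dt A B C m L e (a+1) b c v - Dt A B C m L e a b (c+1) v := by
  unfold Dt
  simp only [term2_eq A B C hA0 hB0 hA hC, term3_eq A B C hA0 hC0 hA hB,
    term4_eq A B C hB0 hC0 hA hB]
  rw [pascal_e A B C hA0 hB0 hB hC m L e a b c v,
      pascal_L B A C hB0 hA0 hA hC m e L b a c v,
      pascal_m C A B hC0 hA0 hA hB e m L c a b v,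
      pascal_e C B A hC0 hB0 hB hA L m e c b a v,
      show msign (L+(e+1)) = -msign (L+e) from by
        rw [show L+(e+1) = (L+e)+1 from by ring, msign_succ],
      show msign (m+L+(e+1)) = -msign (m+L+e) from by
        rw [show m+L+(e+1) = (m+L+e)+1 from by ring, msign_succ]]
  module

lemma D_comb (m L e a b c : ℤ) (v : M) :
    Dt A B C m (L+1) e a b c v
      = Dt A B C m L (e+1) a b c v - Dt A B C (m+1) L e a b c v := by
  rw [D_L hA hB hC hA0 hB0 hC0, D_e hA hB hC hA0 hB0 hC0, D_m hA hB hC hA0 hB0 hC0]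
  abel

lemma D_comb2 (m L e a b c : ℤ) (v : M) :
    Dt A B C m L (e+1) a b c v
      = Dt A B C (m+1) L e a b c v + Dt A B C m (L+1) e a b c v := by
  rw [D_L hA hB hC hA0 hB0 hC0, D_e hA hB hC hA0 hB0 hC0, D_m hA hB hC hA0 hB0 hC0]
  abel

end Dpart
lemma Dt_congr {A B C : Ser M} {m m' L L' e e' a b c : ℤ} {v : M}
    (hm : m = m') (hL : L = L') (he : e = e') :
    Dt A B C m L e a b c v = Dt A B C m' L' e' a b c v := by
  subst hm; subst hL; subst he; rfl

section Dpart2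

variable {A B C : Ser M}
variable (hA : IsFieldSer A) (hB : IsFieldSer B) (hC : IsFieldSer C)
  (hA0 : ∀ n, A n 0 = 0) (hB0 : ∀ n, B n 0 = 0) (hC0 : ∀ n, C n 0 = 0)

include hA hB hC hA0 hB0 hC0

lemma D_expandY (n : ℕ) (m L e a b c : ℤ) (v : M) :
    Dt A B C m L e a b c v
      = ∑ r ∈ range (n+1), ((-1 : ℤ)^r * (n.choose r : ℤ)) •
          Dt A B C (m + r) (L - n) (e + n - r) a b c v := by
  induction n generalizing m L e with
  | zero =>
    simp
  | succ n ih =>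
    set T : ℕ → M := fun r => Dt A B C (m + r) (L - n - 1) (e + n + 1 - r) a b c v with hT
    have key : ∀ r : ℕ, Dt A B C (m + r) (L - n) (e + n - r) a b c v
        = T r - Dt A B C (m + r + 1) (L - n - 1) (e + n - r) a b c v := by
      intro r
      have h := D_comb hA hB hC hA0 hB0 hC0 (m + r) (L - n - 1) (e + n - r) a b c v
      rw [show L - (n : ℤ) - 1 + 1 = L - n from by ring] at h
      rw [h, hT]
      congr 1
      exact Dt_congr rfl rfl (by ring)
    rw [ih m L e, Finset.sum_congr rfl fun r _ => congrArg
      (fun z => ((-1 : ℤ)^r * (n.choose r : ℤ)) • z) (key r)]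
    simp only [smul_sub]
    rw [Finset.sum_sub_distrib]
    have hR : (∑ r ∈ range (n+1+1), ((-1 : ℤ)^r * ((n+1).choose r : ℤ)) •
          Dt A B C (m + r) (L - ((n+1 : ℕ) : ℤ)) (e + ((n+1 : ℕ) : ℤ) - r) a b c v)
        = ∑ r ∈ range (n+1+1), ((-1 : ℤ)^r * ((n+1).choose r : ℤ)) • T r := by
      refine Finset.sum_congr rfl fun r _ => ?_
      rw [hT]
      congr 1
      exact Dt_congr rfl (by push_cast; ring) (by push_cast; ring)
    rw [hR]
    have hsplit : ∀ r ∈ range (n+1),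
        ((-1 : ℤ)^(r+1) * ((n+1).choose (r+1) : ℤ)) • T (r+1)
          = ((-1 : ℤ)^(r+1) * (n.choose (r+1) : ℤ)) • T (r+1)
            - ((-1 : ℤ)^r * (n.choose r : ℤ)) •
                Dt A B C (m + r + 1) (L - n - 1) (e + n - r) a b c v := by
      intro r _
      have hTD : T (r+1) = Dt A B C (m + r + 1) (L - n - 1) (e + n - r) a b c v := by
        rw [hT]; exact Dt_congr (by push_cast; ring) rfl (by push_cast; ring)
      rw [Nat.choose_succ_succ, hTD]
      push_cast
      module
    rw [Finset.sum_range_succ' (fun r => ((-1 : ℤ)^r * ((n+1).choose r : ℤ)) • T r) (n+1)]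
    rw [Finset.sum_congr rfl hsplit, Finset.sum_sub_distrib]
    have h1 : (∑ r ∈ range (n+1), ((-1 : ℤ)^(r+1) * (n.choose (r+1) : ℤ)) • T (r+1))
          + ((-1 : ℤ)^0 * ((n+1).choose 0 : ℤ)) • T 0
        = ∑ r ∈ range (n+1), ((-1 : ℤ)^r * (n.choose r : ℤ)) • T r := by
      rw [show ((-1 : ℤ)^0 * ((n+1).choose 0 : ℤ)) • T 0
          = ((-1 : ℤ)^0 * ((n).choose 0 : ℤ)) • T 0 from by norm_num]
      rw [← Finset.sum_range_succ' (fun r => ((-1 : ℤ)^r * (n.choose r : ℤ)) • T r) (n+1)]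
      rw [Finset.sum_range_succ (fun r => ((-1 : ℤ)^r * (n.choose r : ℤ)) • T r) (n+1)]
      rw [Nat.choose_eq_zero_of_lt (by omega : n < n + 1)]
      norm_num
    rw [sub_add_eq_add_sub, h1]

lemma D_expandZ (t : ℕ) (m L e a b c : ℤ) (v : M) :
    Dt A B C m L e a b c v
      = ∑ s ∈ range (t+1), ((t.choose s : ℤ)) •
          Dt A B C (m + s) (L + t - s) (e - t) a b c v := by
  induction t generalizing m L e with
  | zero =>
    simp
  | succ n ih =>
    set T : ℕ → M := fun s => Dt A B C (m + s) (L + n + 1 - s) (e - n - 1) a b c v with hT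
    have key : ∀ s : ℕ, Dt A B C (m + s) (L + n - s) (e - n) a b c v
        = Dt A B C (m + s + 1) (L + n - s) (e - n - 1) a b c v + T s := by
      intro s
      have h := D_comb2 hA hB hC hA0 hB0 hC0 (m + s) (L + n - s) (e - n - 1) a b c v
      rw [show e - (n : ℤ) - 1 + 1 = e - n from by ring] at h
      rw [h, hT]
      congr 1
      exact Dt_congr rfl (by ring) rfl
    rw [ih m L e, Finset.sum_congr rfl fun s _ => congrArg
      (fun z => ((n.choose s : ℤ)) • z) (key s)]
    simp only [smul_add]
    rw [Finset.sum_add_distrib]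
    have hR : (∑ s ∈ range (n+1+1), (((n+1).choose s : ℤ)) •
          Dt A B C (m + s) (L + ((n+1 : ℕ) : ℤ) - s) (e - ((n+1 : ℕ) : ℤ)) a b c v)
        = ∑ s ∈ range (n+1+1), (((n+1).choose s : ℤ)) • T s := by
      refine Finset.sum_congr rfl fun s _ => ?_
      rw [hT]
      congr 1
      exact Dt_congr rfl (by push_cast; ring) (by push_cast; ring)
    rw [hR]
    have hsplit : ∀ s ∈ range (n+1),
        (((n+1).choose (s+1) : ℤ)) • T (s+1)
          = ((n.choose (s+1) : ℤ)) • T (s+1)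
            + ((n.choose s : ℤ)) •
                Dt A B C (m + s + 1) (L + n - s) (e - n - 1) a b c v := by
      intro s _
      have hTD : T (s+1) = Dt A B C (m + s + 1) (L + n - s) (e - n - 1) a b c v := by
        rw [hT]; exact Dt_congr (by push_cast; ring) (by push_cast; ring) rfl
      rw [Nat.choose_succ_succ, hTD]
      push_cast
      module
    rw [Finset.sum_range_succ' (fun s => (((n+1).choose s : ℤ)) • T s) (n+1)]
    rw [Finset.sum_congr rfl hsplit, Finset.sum_add_distrib]
    have h1 : (∑ s ∈ range (n+1), ((n.choose (s+1) : ℤ)) • T (s+1))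
          + (((n+1).choose 0 : ℤ)) • T 0
        = ∑ s ∈ range (n+1), ((n.choose s : ℤ)) • T s := by
      rw [show (((n+1).choose 0 : ℤ)) • T 0 = ((n.choose 0 : ℤ)) • T 0 from by norm_num]
      rw [← Finset.sum_range_succ' (fun s => ((n.choose s : ℤ)) • T s) (n+1)]
      rw [Finset.sum_range_succ (fun s => ((n.choose s : ℤ)) • T s) (n+1)]
      rw [Nat.choose_eq_zero_of_lt (by omega : n < n + 1)]
      norm_num
    rw [add_right_comm, h1]
    rw [add_comm]

end Dpart2
lemma D_vanish_m {A B C : Ser M}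
    (hA : IsFieldSer A) (hB : IsFieldSer B) (hC : IsFieldSer C)
    (hlA : IsLinSer (k := k) A) (hlB : IsLinSer (k := k) B) (hlC : IsLinSer (k := k) C)
    {m₀ : ℕ} (hAB : HasOrder A B m₀)
    (m L e a b c : ℤ) (v : M) (hm : (m₀ : ℤ) ≤ m) :
    Dt A B C m L e a b c v = 0 := by
  have hA0 := linzero (k := k) hlA
  have hB0 := linzero (k := k) hlB
  have hC0 := linzero (k := k) hlC
  have hm0 : (0 : ℤ) ≤ m := by omega
  have hloc : IsLocalAt A B m.toNat := isLocalAt_of_le hAB.1 (by omega)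
  unfold Dt
  rw [term2_eq A B C hA0 hB0 hA hC m L e a b c v,
      ← swap_outer A B C hA0 hB0 hA hB hC m L e a b c hm0 hloc v,
      term3_eq A B C hA0 hC0 hA hB m L e a b c v,
      term4_eq A B C hB0 hC0 hA hB m L e a b c v,
      swap_inner C A B hC0 hA0 hB0 hlC hA hB e m L c a b hm0 hloc v]
  rw [smul_smul]
  rw [show msign (L + e) * msign m = msign (m + L + e) from by
    rw [← msign_add, show L + e + m = m + L + e from by ring]]
  abel

lemma D_vanish_le {A B C : Ser M}
    (hA : IsFieldSer A) (hB : IsFieldSer B) (hC : IsFieldSer C)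
    (hlA : IsLinSer (k := k) A) (hlB : IsLinSer (k := k) B) (hlC : IsLinSer (k := k) C)
    {k₀ l₀ : ℕ} (hAC : HasOrder A C k₀) (hBC : HasOrder B C l₀)
    (m L e a b c : ℤ) (v : M) (he : (k₀ : ℤ) ≤ e) (hL : (l₀ : ℤ) ≤ L) :
    Dt A B C m L e a b c v = 0 := by
  have hA0 := linzero (k := k) hlA
  have hB0 := linzero (k := k) hlB
  have hC0 := linzero (k := k) hlC
  have he0 : (0 : ℤ) ≤ e := by omega
  have hL0 : (0 : ℤ) ≤ L := by omega
  have hlocAC : IsLocalAt A C e.toNat := isLocalAt_of_le hAC.1 (by omega)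
  have hlocBC : IsLocalAt B C L.toNat := isLocalAt_of_le hBC.1 (by omega)
  unfold Dt
  rw [swap_inner A B C hA0 hB0 hC0 hlA hB hC m L e a b c hL0 hlocBC v,
      swap_outer A C B hA0 hC0 hA hC hB e L m a c b he0 hlocAC v,
      term2_eq A B C hA0 hB0 hA hC m L e a b c v,
      swap_inner B A C hB0 hA0 hC0 hlB hA hC m e L b a c he0 hlocAC v,
      swap_outer B C A hB0 hC0 hB hC hA L e m b c a hL0 hlocBC v,
      term3_eq A B C hA0 hC0 hA hB m L e a b c v,
      term4_eq A B C hB0 hC0 hA hB m L e a b c v]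
  simp only [smul_smul]
  rw [show msign L * msign e = msign (L + e) from (msign_add L e).symm]
  rw [show msign m * (msign e * msign L) = msign (m + L + e) from by
    rw [← msign_add, ← msign_add, show m + (e + L) = m + L + e from by ring]]
  abel
/-- For pairwise local fields `A, B, C` with orders of locality `k₀` (A,C), `l₀` (B,C),
`m₀` (A,B), and integers `e, l, m`, if `n ≥ k₀ + l₀ + m₀ - e - l - m - 1` then
`(y-z)^n [A(x),B(y)] C(z) (x-y)^m (y-z)^l (x-z)^e
 = (y-z)^n C(z) [A(x),B(y)] (x-y)^m (y-z)^l (x-z)^e`,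
stated coefficientwise (the total `(y-z)`-exponent being `L = l + n`). -/
theorem stmt7 (A B C : Ser M)
    (hA : IsFieldSer A) (hB : IsFieldSer B) (hC : IsFieldSer C)
    (hlA : IsLinSer (k := k) A) (hlB : IsLinSer (k := k) B) (hlC : IsLinSer (k := k) C)
    (k₀ l₀ m₀ : ℕ) (hAC : HasOrder A C k₀) (hBC : HasOrder B C l₀) (hAB : HasOrder A B m₀)
    (e l m : ℤ) (n : ℕ) (hn : (k₀ : ℤ) + l₀ + m₀ - e - l - m - 1 ≤ n)
    (a b c : ℤ) (v : M) :
    term1 A B C m (l + n) e a b c v - term2 A B C m (l + n) e a b c v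
      = term3 A B C m (l + n) e a b c v - term4 A B C m (l + n) e a b c v := by
  have hA0 := linzero (k := k) hlA
  have hB0 := linzero (k := k) hlB
  have hC0 := linzero (k := k) hlC
  have hD : Dt A B C m (l + n) e a b c v = 0 := by
    set L : ℤ := l + n with hLdef
    have htot : (k₀ : ℤ) + l₀ + m₀ - 1 ≤ m + L + e := by omega
    set n' : ℕ := ((k₀ : ℤ) + m₀ - m - e).toNat + 1 with hn'
    have hn'ge : (k₀ : ℤ) + m₀ - m - e < (n' : ℤ) := by
      rw [hn']; push_cast; omega
    rw [D_expandY hA hB hC hA0 hB0 hC0 n' m L e a b c v]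
    apply Finset.sum_eq_zero
    intro r hr
    rcases le_or_gt ((m₀ : ℤ)) (m + r) with hcase | hcase
    · rw [D_vanish_m hA hB hC hlA hlB hlC hAB (m + r) (L - n') (e + n' - r) a b c v hcase,
        smul_zero]
    · have hrb : (r : ℤ) ≤ (m₀ : ℤ) - m - 1 := by omega
      set t : ℕ := (e + (n' : ℤ) - r - k₀).toNat with htdef
      have ht : (t : ℤ) = e + n' - r - k₀ := by omega
      rw [D_expandZ hA hB hC hA0 hB0 hC0 t (m + r) (L - n') (e + n' - r) a b c v]
      have hz : (∑ s ∈ range (t + 1), ((t.choose s : ℤ)) •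
          Dt A B C (m + r + s) (L - n' + t - s) (e + n' - r - t) a b c v) = 0 := by
        apply Finset.sum_eq_zero
        intro s hs
        rcases le_or_gt ((m₀ : ℤ)) (m + r + s) with hc2 | hc2
        · rw [D_vanish_m hA hB hC hlA hlB hlC hAB (m + r + s) (L - n' + t - s)
            (e + n' - r - t) a b c v hc2, smul_zero]
        · rw [D_vanish_le hA hB hC hlA hlB hlC hAC hBC (m + r + s) (L - n' + t - s)
            (e + n' - r - t) a b c v (by omega) (by omega), smul_zero]
      rw [hz, smul_zero]
  unfold Dt at hD
  exact sub_eq_zero.mp hD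

end VA
end

section
/- If A(z), B(z), C(z) are pairwise mutually local fields on M, then the residual product A(z)_(m)B(z) is mutually local with C(z) for every integer m; moreover the order of locality of A(z)_(m)B(z) and C(z) is at most k₀ + ℓ₀ + m₀ − m − 1 when m < m₀, where k₀, ℓ₀, m₀ are the orders of locality of (A,C), (B,C), (A,B) respectively. -/
open Finset

section VA

variable {k M : Type*} [Field k] [CharZero k] [AddCommGroup M] [Module k M]

/-!
Arrays `(r, s, t) ↦ A_r B_s C_t v` (and the five other orderings of `A, B, C`) carry an action of
the group ring of `ℤ³` by translations `σ₁, σ₂, σ₃` of the indices, which play the roles of the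
formal variables `z, w, x`; locality of order `n` says that `(z - w) ^ n` kills the commutator
array. The residual product expands `(z - w) ^ m` in `|z| > |w|` in front of `A(z)B(w)` and in
`|w| > |z|` in front of `B(w)A(z)`; both expansions commute with translations, and `z - w` raises
`m` by one. Following Dong, write `(w - x) ^ N = ∑ (z - x) ^ ρ (w - z) ^ (N - ρ)`: a term
with `m + N - ρ ≥ m₀` vanishes by locality of `A` and `B`, and in every other term the exponent
of `z - x` is at least `k₀ + l₀`, so that splitting `z - x = (z - w) + (w - x)` once more kills
each term by one of the three localities.
-/

section Ladder

variable {R V : Type*} [CommRing R] [AddCommGroup V] [Module R V]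

theorem pow_mul_pow_smul_eq_zero {s t : R} {G : V} {a b c α β : ℕ} (hs : s ^ b • G = 0)
    (hts : (t ^ c * (t + s) ^ a) • G = 0) (hα : a + c ≤ α) (hαβ : a + b + c ≤ α + β + 1) :
    (s ^ β * t ^ α) • G = 0 := by
  obtain ⟨n, rfl⟩ := Nat.exists_eq_add_of_le' (le_of_add_le_right hα)
  have hexp : t ^ n = ∑ ρ ∈ range (n + 1), (t + s) ^ ρ * (-s) ^ (n - ρ) * n.choose ρ := by
    rw [← add_pow, add_neg_cancel_right]
  rw [pow_add, hexp, sum_mul, mul_sum, sum_smul]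
  refine sum_eq_zero fun ρ hρ => ?_
  rcases le_or_gt a ρ with hρa | hρa
  · obtain ⟨d, rfl⟩ := Nat.exists_eq_add_of_le hρa
    calc _ = (s ^ β * (t + s) ^ d * (-s) ^ (n - (a + d)) * n.choose (a + d)) •
          (t ^ c * (t + s) ^ a) • G := by rw [← mul_smul]; ring_nf
      _ = 0 := by rw [hts, smul_zero]
  · obtain ⟨d, hd⟩ := Nat.exists_eq_add_of_le (show b ≤ β + (n - ρ) by omega)
    have hs' : s ^ β * (-s) ^ (n - ρ) = (-1) ^ (n - ρ) * s ^ d * s ^ b := by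
      rw [neg_pow, mul_left_comm, ← pow_add, hd, pow_add]; ring
    calc _ = ((-1) ^ (n - ρ) * s ^ d * (t + s) ^ ρ * n.choose ρ * t ^ c) • s ^ b • G := by
          rw [← mul_smul]; congr 1; linear_combination ((t + s) ^ ρ * n.choose ρ * t ^ c) * hs'
      _ = 0 := by rw [hs, smul_zero]

/-- `S` extends `n ↦ t ^ n • S 0` from `ℕ` to `ℤ`. -/
def IsLadder (t : R) (S : ℤ → V) : Prop := ∀ j, t • S j = S (j + 1)

namespace IsLadder

variable {t s : R} {S T : ℤ → V}

theorem pow_smul (hS : IsLadder t S) (j : ℤ) (n : ℕ) : t ^ n • S j = S (j + n) := by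
  induction n with
  | zero => simp
  | succ n ih => rw [pow_succ', mul_smul, ih, hS, Nat.cast_succ, add_assoc]

theorem apply_natCast (hS : IsLadder t S) (n : ℕ) : S n = t ^ n • S 0 := by
  simpa using (hS.pow_smul 0 n).symm

theorem sub (hS : IsLadder t S) (hT : IsLadder t T) : IsLadder t (S - T) := fun j => by
  simp only [Pi.sub_apply, smul_sub, hS j, hT j]

theorem add_pow_smul_eq_zero {a b c K : ℕ} {j : ℤ} (hS : IsLadder t S)
    (hs : ∀ j, s ^ b • S j = 0) (hts : (t ^ c * (t + s) ^ a) • S 0 = 0)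
    (hK : a + b + c ≤ j + K + 1) : (t + s) ^ K • S j = 0 := by
  rw [add_pow, sum_smul]
  refine sum_eq_zero fun τ hτ => ?_
  rw [mem_range] at hτ
  rcases le_or_gt b (K - τ) with hb | hb
  · obtain ⟨d, hd⟩ := Nat.exists_eq_add_of_le hb
    rw [hd, pow_add, show t ^ τ * (s ^ b * s ^ d) * K.choose τ
      = (t ^ τ * s ^ d * K.choose τ) * s ^ b by ring, mul_smul, hs, smul_zero]
  · lift j + τ to ℕ using (by omega) with n hn
    have hα : a + c ≤ n := by omega
    have hαβ : a + b + c ≤ n + (K - τ) + 1 := by omega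
    rw [show t ^ τ * s ^ (K - τ) * K.choose τ = K.choose τ * (s ^ (K - τ) * t ^ τ) by ring,
      mul_smul, mul_smul, hS.pow_smul, ← hn, hS.apply_natCast, ← mul_smul (s ^ (K - τ)),
      pow_mul_pow_smul_eq_zero (hs 0) hts hα hαβ, smul_zero]

theorem pow_smul_eq_zero {P Q : ℤ → V} {a b c N : ℕ} {m : ℤ} (hP : IsLadder t P)
    (hQ : IsLadder t Q) (hPQ : ∀ j, (t + s) ^ a • (P j - Q j) = 0) (hQs : ∀ j, s ^ b • Q j = 0)
    (hQ0 : (t ^ c * (t + s) ^ a) • Q 0 = 0) (hP0 : t ^ c • P 0 = 0)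
    (hN : a + b + c ≤ m + N + 1) : s ^ N • P m = 0 := by
  have hexp : s ^ N = ∑ ρ ∈ range (N + 1), (t + s) ^ ρ * (-t) ^ (N - ρ) * N.choose ρ := by
    rw [← add_pow, add_neg_cancel_comm]
  rw [hexp, sum_smul]
  refine sum_eq_zero fun ρ hρ => ?_
  rw [mem_range] at hρ
  have hPρ : (t + s) ^ ρ • P (m + (N - ρ : ℕ)) = 0 := by
    rcases le_or_gt (c : ℤ) (m + (N - ρ : ℕ)) with hc | hc
    · lift m + (N - ρ : ℕ) to ℕ using (by omega) with n
      obtain ⟨d, rfl⟩ := Nat.exists_eq_add_of_le (show c ≤ n by omega)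
      rw [hP.apply_natCast, pow_add, mul_comm (t ^ c), mul_smul, hP0, smul_zero, smul_zero]
    · have hQρ : (t + s) ^ ρ • Q (m + (N - ρ : ℕ)) = 0 :=
        hQ.add_pow_smul_eq_zero hQs hQ0 (by omega)
      obtain ⟨d, rfl⟩ := Nat.exists_eq_add_of_le (show a ≤ ρ by omega)
      rw [← sub_add_cancel (P _) (Q _), smul_add, hQρ, add_zero, pow_add,
        mul_comm ((t + s) ^ a), mul_smul, hPQ, smul_zero]
  rw [show (t + s) ^ ρ * (-t) ^ (N - ρ) * N.choose ρ
      = ((-1) ^ (N - ρ) * N.choose ρ) * ((t + s) ^ ρ * t ^ (N - ρ)) by rw [neg_pow]; ring,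
    mul_smul _ ((t + s) ^ ρ * _), mul_smul ((t + s) ^ ρ), hP.pow_smul, hPρ, smul_zero]

end IsLadder

/-- In the application `F₁, …, F₆` are the arrays `ABC, BAC, CAB, CBA, ACB, BCA`, and `E`, `E'`
the expansions of `(z - w) ^ m` in `|z| > |w|` and in `|w| > |z|`. -/
theorem dong {z w x : R} {U U' : Submodule R V} (E : ℤ → U →ₗ[R] V) (E' : ℤ → U' →ₗ[R] V)
    (hE : ∀ u, IsLadder (z - w) (E · u)) (hE' : ∀ u, IsLadder (z - w) (E' · u))
    (hE₀ : ∀ u, E 0 u = u) (hE'₀ : ∀ u, E' 0 u = u)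
    {F₁ F₃ F₅ : U} {F₂ F₄ F₆ : U'} {a b c N : ℕ} {m : ℤ}
    (h₁₂ : (z - w) ^ c • ((F₁ : V) - F₂) = 0) (h₃₄ : (z - w) ^ c • ((F₃ : V) - F₄) = 0)
    (h₅₃ : (z - x) ^ a • ((F₅ : V) - F₃) = 0) (h₂₆ : (z - x) ^ a • ((F₂ : V) - F₆) = 0)
    (h₁₅ : (w - x) ^ b • ((F₁ : V) - F₅) = 0) (h₆₄ : (w - x) ^ b • ((F₆ : V) - F₄) = 0)
    (hN : a + b + c ≤ m + N + 1) :
    (w - x) ^ N • (E m F₁ - E' m F₂ - (E m F₃ - E' m F₄)) = 0 := by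
  have hzx : z - x = (z - w) + (w - x) := (sub_add_sub_cancel z w x).symm
  have hX : (z - w) ^ c • ((F₁ : V) - F₂ - (F₃ - F₄)) = 0 := by rw [smul_sub, h₁₂, h₃₄, sub_zero]
  have hY : (z - x) ^ a • ((F₂ : V) - F₆ - (F₅ - F₃)) = 0 := by rw [smul_sub, h₅₃, h₂₆, sub_zero]
  have hU {W : Submodule R V} {r : R} {G G' : W} (h : r • ((G : V) - G') = 0) :
      r • (G - G') = 0 := by
    ext1; simpa only [Submodule.coe_smul, Submodule.coe_sub, Submodule.coe_zero] using h
  -- `Q` is the part of the commutator killed by `(w - x) ^ b`, and `P - Q` the part killed by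
  -- `(z - x) ^ a`.
  refine IsLadder.pow_smul_eq_zero (t := z - w)
    (P := fun j => E j F₁ - E' j F₂ - (E j F₃ - E' j F₄))
    (Q := fun j => E j (F₁ - F₅) - E' j (F₆ - F₄))
    (((hE F₁).sub (hE' F₂)).sub ((hE F₃).sub (hE' F₄))) ((hE _).sub (hE' _)) (fun j => ?_)
    (fun j => ?_) ?_ ?_ hN
  · rw [← hzx, show E j F₁ - E' j F₂ - (E j F₃ - E' j F₄) - (E j (F₁ - F₅) - E' j (F₆ - F₄))
      = E j (F₅ - F₃) - E' j (F₂ - F₆) by simp only [map_sub]; abel,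
      smul_sub, ← map_smul, ← map_smul, hU h₅₃, hU h₂₆, map_zero, map_zero, sub_zero]
  · simp only [smul_sub, ← map_smul, hU h₁₅, hU h₆₄, map_zero, sub_zero]
  · rw [← hzx, hE₀, hE'₀, show ((F₁ - F₅ : U) : V) - (F₆ - F₄ : U')
      = ((F₁ : V) - F₂ - (F₃ - F₄)) + ((F₂ : V) - F₆ - (F₅ - F₃)) by
        simp only [Submodule.coe_sub]; abel,
      smul_add, mul_smul, mul_smul, smul_comm ((z - w) ^ c), hX, hY, smul_zero, smul_zero, add_zero]
  · simp only [hE₀, hE'₀, hX]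

end Ladder

/-- The coefficient of `z ^ (m - i) * w ^ i` in the expansion of `(z - w) ^ m` in `|z| > |w|`. -/
def sgnChoose (m : ℤ) (i : ℕ) : ℤ := (-1) ^ i * ichoose m i

theorem ichoose_eq_choose (m : ℤ) (i : ℕ) : ichoose m i = Ring.choose m i := by
  unfold ichoose
  split_ifs with hm
  · lift m to ℕ using hm
    simp [Ring.choose_natCast]
  · obtain ⟨r, rfl⟩ : ∃ r : ℤ, m = -r := ⟨-m, (neg_neg m).symm⟩
    lift r + i - 1 to ℕ using (by omega) with n hn
    rw [Ring.choose_neg, ← hn, Ring.choose_natCast, Units.smul_def, Int.coe_negOnePow_natCast,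
      show ((i : ℤ) - 1 - -r).toNat = n by omega, smul_eq_mul]

@[simp]
theorem sgnChoose_zero_right (m : ℤ) : sgnChoose m 0 = 1 := by
  simp [sgnChoose, ichoose_eq_choose]

theorem sgnChoose_zero_left {i : ℕ} (hi : 0 < i) : sgnChoose 0 i = 0 := by
  simp [sgnChoose, ichoose_eq_choose, Ring.choose_zero_pos ℤ hi]

theorem sgnChoose_succ_succ (m : ℤ) (i : ℕ) :
    sgnChoose (m + 1) (i + 1) = sgnChoose m (i + 1) - sgnChoose m i := by
  simp only [sgnChoose, ichoose_eq_choose, Ring.choose_succ_succ]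
  ring

theorem msign_zero : msign 0 = 1 := by simp [msign]

theorem msign_add_one (m : ℤ) : msign (m + 1) = -msign m := by
  unfold msign
  by_cases hm : Even m <;> simp [hm]

theorem sum_sgnChoose_sub_sum_sgnChoose_succ (m : ℤ) {Φ : ℕ → M} {I : ℕ}
    (hΦ : ∀ i, I ≤ i → Φ i = 0) :
    ∑ i ∈ range I, sgnChoose m i • Φ i - ∑ i ∈ range I, sgnChoose m i • Φ (i + 1)
      = ∑ i ∈ range I, sgnChoose (m + 1) i • Φ i := by
  cases I with
  | zero => simp
  | succ J =>
    rw [sum_range_succ' _ J, sum_range_succ _ J, sum_range_succ' _ J, hΦ (J + 1) le_rfl]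
    simp only [sgnChoose_succ_succ, sub_smul, sum_sub_distrib, sgnChoose_zero_right, smul_zero]
    abel

theorem finsum_eq_sum_range {f : ℕ → M} {I : ℕ} (hf : ∀ i, I ≤ i → f i = 0) :
    ∑ᶠ i, f i = ∑ i ∈ range I, f i :=
  finsum_eq_sum_of_support_subset f fun i hi =>
    mem_range.mpr (not_le.mp fun hIi => hi (hf i hIi))

/-- The three coordinates are the mode indices of the three fields in a triple product. -/
abbrev Arr3 (M : Type*) := ℤ × ℤ × ℤ → M

abbrev ShiftAlg := AddMonoidAlgebra ℤ (ℤ × ℤ × ℤ)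

namespace Arr3

noncomputable def translate : Multiplicative (ℤ × ℤ × ℤ) →* Module.End ℤ (Arr3 M) where
  toFun g :=
    { toFun := fun F x => F (x + g.toAdd)
      map_add' := fun _ _ => rfl
      map_smul' := fun _ _ => rfl }
  map_one' := LinearMap.ext fun F => funext fun x => congrArg F (add_zero x)
  map_mul' _ _ := LinearMap.ext fun F => funext fun _ => congrArg F (add_assoc _ _ _).symm

noncomputable instance : Module ShiftAlg (Arr3 M) :=
  Module.compHom (Arr3 M) (AddMonoidAlgebra.lift ℤ (Module.End ℤ (Arr3 M)) _ translate).toRingHom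

theorem smul_apply (f : ShiftAlg) (F : Arr3 M) (x : ℤ × ℤ × ℤ) :
    (f • F) x = f.coeff.sum fun g c => c • F (x + g) := by
  change (AddMonoidAlgebra.lift ℤ (Module.End ℤ (Arr3 M)) _ translate f) F x = _
  rw [AddMonoidAlgebra.lift_apply, LinearMap.finsupp_sum_apply, Finsupp.sum, Finset.sum_apply]
  rfl

@[simp]
theorem single_smul_apply (g : ℤ × ℤ × ℤ) (c : ℤ) (F : Arr3 M) (x : ℤ × ℤ × ℤ) :
    ((AddMonoidAlgebra.single g c : ShiftAlg) • F) x = c • F (x + g) := by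
  rw [smul_apply, AddMonoidAlgebra.coeff_single, Finsupp.sum_single_index (zero_smul ℤ (F (x + g)))]

theorem sub_pow_smul_apply (g h : ℤ × ℤ × ℤ) (n : ℕ) (F : Arr3 M) (x : ℤ × ℤ × ℤ) :
    ((AddMonoidAlgebra.single g 1 - AddMonoidAlgebra.single h 1 : ShiftAlg) ^ n • F) x
      = ∑ i ∈ range (n + 1),
          ((-1) ^ i * n.choose i : ℤ) • F (x + ((n : ℤ) - i) • g + (i : ℤ) • h) := by
  rw [sub_eq_neg_add, ← AddMonoidAlgebra.single_neg, add_pow, sum_smul, Finset.sum_apply]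
  refine sum_congr rfl fun i hi => ?_
  rw [AddMonoidAlgebra.single_pow, AddMonoidAlgebra.single_pow, AddMonoidAlgebra.natCast_def,
    AddMonoidAlgebra.single_mul_single, AddMonoidAlgebra.single_mul_single, single_smul_apply]
  have hi : i ≤ n := Nat.lt_succ_iff.mp (mem_range.mp hi)
  congr 2
  · ring
  · rw [add_zero, add_comm (i • h), ← add_assoc, ← natCast_zsmul, ← natCast_zsmul, Nat.cast_sub hi]

def VanishesFrom (g h : ℤ × ℤ × ℤ) (F : Arr3 M) (x : ℤ × ℤ × ℤ) (I : ℕ) : Prop :=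
  ∀ (j : ℤ) (i : ℕ), I ≤ i → F (x + j • g + (i : ℤ) • h) = 0

section Expand

variable {g h : ℤ × ℤ × ℤ}

theorem VanishesFrom.mono {F : Arr3 M} {x : ℤ × ℤ × ℤ} {I J : ℕ} (hF : VanishesFrom g h F x I)
    (hIJ : I ≤ J) : VanishesFrom g h F x J :=
  fun j i hi => hF j i (hIJ.trans hi)

theorem VanishesFrom.smul {F : Arr3 M} {x : ℤ × ℤ × ℤ} {I : ℕ} (f : ShiftAlg)
    (hF : ∀ a ∈ f.coeff.support, VanishesFrom g h F (x + a) I) : VanishesFrom g h (f • F) x I :=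
  fun j i hi => by
    rw [smul_apply]
    refine sum_eq_zero fun a ha => ?_
    dsimp only
    rw [show x + j • g + (i : ℤ) • h + a = x + a + j • g + (i : ℤ) • h by abel, hF a ha j i hi,
      smul_zero]

variable (M g h) in
/-- The arrays at which every `expand g h m` is a finite sum at every point. -/
def truncated : Submodule ShiftAlg (Arr3 M) where
  carrier := {F | ∀ x, ∃ I, VanishesFrom g h F x I}
  add_mem' {F G} hF hG x := by
    obtain ⟨I, hI⟩ := hF x
    obtain ⟨J, hJ⟩ := hG x
    refine ⟨max I J, fun j i hi => ?_⟩
    rw [Pi.add_apply, hI j i (le_of_max_le_left hi), hJ j i (le_of_max_le_right hi), add_zero]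
  zero_mem' _ := ⟨0, fun _ _ _ => rfl⟩
  smul_mem' f F hF x := by
    choose I hI using fun a => hF (x + a)
    exact ⟨f.coeff.support.sup I, VanishesFrom.smul f fun a ha => (hI a).mono (le_sup ha)⟩

variable (g h) in
/-- The expansion of `(σ_g - σ_h) ^ m` in nonnegative powers of `σ_h`, applied to `F`. -/
noncomputable def expand (m : ℤ) (F : Arr3 M) : Arr3 M := fun x =>
  ∑ᶠ i : ℕ, sgnChoose m i • F (x + (m - i) • g + (i : ℤ) • h)

theorem VanishesFrom.expand_eq_sum {F : Arr3 M} {x : ℤ × ℤ × ℤ} {I : ℕ}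
    (hF : VanishesFrom g h F x I) (m : ℤ) :
    expand g h m F x = ∑ i ∈ range I, sgnChoose m i • F (x + (m - i) • g + (i : ℤ) • h) :=
  finsum_eq_sum_range fun i hi => by rw [hF _ i hi, smul_zero]

theorem expand_zero (F : Arr3 M) : expand g h 0 F = F := funext fun x => by
  rw [expand, finsum_eq_sum_range (I := 1) fun i hi => by rw [sgnChoose_zero_left hi, zero_smul],
    sum_range_one]
  simp

variable (g h) in
noncomputable def expandₗ (m : ℤ) : truncated M g h →ₗ[ShiftAlg] Arr3 M where
  toFun F := expand g h m F
  map_add' F G := funext fun x => by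
    obtain ⟨I, hI⟩ := F.2 x
    obtain ⟨J, hJ⟩ := G.2 x
    have hI' := hI.mono (le_max_left I J)
    have hJ' := hJ.mono (le_max_right I J)
    have hFG : VanishesFrom g h ((F : Arr3 M) + (G : Arr3 M)) x (max I J) := fun j i hi => by
      rw [Pi.add_apply, hI' j i hi, hJ' j i hi, add_zero]
    rw [Submodule.coe_add, Pi.add_apply, hFG.expand_eq_sum, hI'.expand_eq_sum, hJ'.expand_eq_sum,
      ← sum_add_distrib]
    simp only [Pi.add_apply, smul_add]
  map_smul' f F := funext fun x => by
    choose I hI using fun a => F.2 (x + a)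
    have hF a (ha : a ∈ f.coeff.support) := (hI a).mono (le_sup (f := I) ha)
    rw [RingHom.id_apply, Submodule.coe_smul, (VanishesFrom.smul f hF).expand_eq_sum]
    simp only [smul_apply, Finsupp.sum, smul_sum]
    rw [sum_comm]
    refine sum_congr rfl fun a ha => ?_
    rw [(hF a ha).expand_eq_sum, smul_sum]
    refine sum_congr rfl fun i _ => ?_
    rw [smul_comm, add_right_comm (x + _), add_right_comm x]

@[simp]
theorem expandₗ_apply (m : ℤ) (F : truncated M g h) : expandₗ g h m F = expand g h m (F : Arr3 M) :=
  rfl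

theorem isLadder_expand {F : Arr3 M} (hF : F ∈ truncated M g h) :
    IsLadder (AddMonoidAlgebra.single g 1 - AddMonoidAlgebra.single h 1 : ShiftAlg)
      (fun m => expand g h m F) := fun m => funext fun x => by
  dsimp only
  obtain ⟨I, hI⟩ := hF x
  have hIg : VanishesFrom g h F (x + g) I := fun j i hi => by
    rw [show x + g + j • g + (i : ℤ) • h = x + (j + 1) • g + (i : ℤ) • h by module, hI _ i hi]
  have hIh : VanishesFrom g h F (x + h) I := fun j i hi => by
    rw [show x + h + j • g + (i : ℤ) • h = x + j • g + ((i + 1 : ℕ) : ℤ) • h by push_cast; module,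
      hI _ _ (hi.trans (Nat.le_succ i))]
  rw [sub_smul, Pi.sub_apply, single_smul_apply, single_smul_apply, one_smul, one_smul,
    hIg.expand_eq_sum, hIh.expand_eq_sum, hI.expand_eq_sum,
    ← sum_sgnChoose_sub_sum_sgnChoose_succ m (Φ := fun i => F (x + (m + 1 - i) • g + (i : ℤ) • h))
      fun i hi => hI _ i hi]
  congr 1 <;> refine sum_congr rfl fun i _ => ?_
  · congr 2; module
  · congr 2; push_cast; module

theorem isLadder_msign_smul_expand {F : Arr3 M} (hF : F ∈ truncated M h g) :
    IsLadder (AddMonoidAlgebra.single g 1 - AddMonoidAlgebra.single h 1 : ShiftAlg)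
      (fun m => msign m • expand h g m F) := fun m => by
  dsimp only
  rw [smul_comm, ← neg_sub, neg_smul, isLadder_expand hF m, msign_add_one, neg_smul, smul_neg]

end Expand

end Arr3

local notation "σ₁" => (AddMonoidAlgebra.single ((1, 0, 0) : ℤ × ℤ × ℤ) (1 : ℤ) : ShiftAlg)
local notation "σ₂" => (AddMonoidAlgebra.single ((0, 1, 0) : ℤ × ℤ × ℤ) (1 : ℤ) : ShiftAlg)
local notation "σ₃" => (AddMonoidAlgebra.single ((0, 0, 1) : ℤ × ℤ × ℤ) (1 : ℤ) : ShiftAlg)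

namespace Arr3

theorem σ₁_sub_σ₂_pow_smul_apply (n : ℕ) (F : Arr3 M) (r s t : ℤ) :
    ((σ₁ - σ₂) ^ n • F) (r, s, t)
      = ∑ i ∈ range (n + 1), ((-1) ^ i * n.choose i : ℤ) • F (r + n - i, s + i, t) := by
  simp [sub_pow_smul_apply, add_sub_assoc]

theorem σ₁_sub_σ₃_pow_smul_apply (n : ℕ) (F : Arr3 M) (r s t : ℤ) :
    ((σ₁ - σ₃) ^ n • F) (r, s, t)
      = ∑ i ∈ range (n + 1), ((-1) ^ i * n.choose i : ℤ) • F (r + n - i, s, t + i) := by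
  simp [sub_pow_smul_apply, add_sub_assoc]

theorem σ₂_sub_σ₃_pow_smul_apply (n : ℕ) (F : Arr3 M) (r s t : ℤ) :
    ((σ₂ - σ₃) ^ n • F) (r, s, t)
      = ∑ i ∈ range (n + 1), ((-1) ^ i * n.choose i : ℤ) • F (r, s + n - i, t + i) := by
  simp [sub_pow_smul_apply, add_sub_assoc]

theorem mem_truncated₁₂ {F : Arr3 M} (hF : ∀ t, ∃ s₀, ∀ r s, s₀ ≤ s → F (r, s, t) = 0) :
    F ∈ truncated M (1, 0, 0) (0, 1, 0) := fun ⟨r, s, t⟩ => by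
  obtain ⟨s₀, hs₀⟩ := hF t
  exact ⟨(s₀ - s).toNat, fun j i hi => by simpa using hs₀ (r + j) (s + i) (by omega)⟩

theorem mem_truncated₂₁ {F : Arr3 M} (hF : ∀ t, ∃ r₀, ∀ r s, r₀ ≤ r → F (r, s, t) = 0) :
    F ∈ truncated M (0, 1, 0) (1, 0, 0) := fun ⟨r, s, t⟩ => by
  obtain ⟨r₀, hr₀⟩ := hF t
  exact ⟨(r₀ - r).toNat, fun j i hi => by simpa using hr₀ (r + i) (s + j) (by omega)⟩

end Arr3

section Fields

variable {A B C : Ser M}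

theorem isLocalAt_iff_sum_commutator {n : ℕ} :
    IsLocalAt A B n ↔ ∀ (p q : ℤ) (v : M), ∑ i ∈ range (n + 1), ((-1) ^ i * n.choose i : ℤ) •
      (A (p + n - i) (B (q + i) v) - B (q + i) (A (p + n - i) v)) = 0 := by
  have hreflect (p q : ℤ) (v : M) :
      ∑ i ∈ range (n + 1),
          ((-1) ^ i * n.choose i : ℤ) • ((-1 : ℤ) ^ n • B (q + n - i) (A (p + i) v))
        = ∑ i ∈ range (n + 1), ((-1) ^ i * n.choose i : ℤ) • B (q + i) (A (p + n - i) v) := by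
    rw [← sum_range_reflect]
    refine sum_congr rfl fun i hi => ?_
    obtain ⟨d, rfl⟩ := Nat.exists_eq_add_of_le (Nat.lt_succ_iff.mp (mem_range.mp hi))
    have hsq : ((-1 : ℤ) ^ d) ^ 2 = 1 := by rw [← pow_mul, pow_mul', neg_one_sq, one_pow]
    rw [smul_smul, add_tsub_cancel_right, add_tsub_cancel_left, ← Nat.choose_symm_add]
    congr 1
    · linear_combination ((-1) ^ i * ((i + d).choose i : ℤ)) * hsq
    · push_cast; ring_nf
  simp only [IsLocalAt, smul_sub, sum_sub_distrib, hreflect]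

theorem IsLocalAt.sum_map_commutator_eq_zero {n : ℕ} (h : IsLocalAt A B n) (φ : M →+ M)
    (p q : ℤ) (v : M) : ∑ i ∈ range (n + 1), ((-1) ^ i * n.choose i : ℤ) •
      (φ (A (p + n - i) (B (q + i) v)) - φ (B (q + i) (A (p + n - i) v))) = 0 := by
  simp_rw [← map_sub, ← map_zsmul, ← map_sum, isLocalAt_iff_sum_commutator.mp h p q v, map_zero]

theorem IsFieldSer.eventually_eq_zero (hA : IsFieldSer A) (u : M) (s : ℤ) :
    ∀ᶠ i : ℕ in Filter.atTop, A (s + i) u = 0 := by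
  obtain ⟨n₀, hn₀⟩ := hA u
  exact Filter.eventually_atTop.mpr ⟨(n₀ - s).toNat, fun i hi => hn₀ _ (by omega)⟩

theorem resProd_eq_sum (hA₀ : ∀ n, A n 0 = 0) (hB₀ : ∀ n, B n 0 = 0) {m s : ℤ} {u : M} {I : ℕ}
    (hAI : ∀ i : ℕ, I ≤ i → A i u = 0) (hBI : ∀ i : ℕ, I ≤ i → B (s + i) u = 0) :
    resProd A B m s u = ∑ i ∈ range I, sgnChoose m i • A (m - i) (B (s + i) u)
      - msign m • ∑ i ∈ range I, sgnChoose m i • B (s + (m - i)) (A i u) := by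
  rw [resProd, finsum_eq_sum_range fun i hi => by
    rw [hAI i hi, hBI i hi, hA₀, hB₀, smul_zero, sub_zero, smul_zero]]
  simp only [smul_sub, sum_sub_distrib, smul_sum, smul_comm (msign m), sgnChoose]
  congr 2 with i
  ring_nf

end Fields

namespace Arr3

/-- Its value at `(0, s, t)` is `[(A_(m)B)_s, C_t] v`. -/
noncomputable def resProdCommArr (A B C : Ser M) (m : ℤ) (v : M) : Arr3 M :=
  expand (1, 0, 0) (0, 1, 0) m (fun x => A x.1 (B x.2.1 (C x.2.2 v)))
    - msign m • expand (0, 1, 0) (1, 0, 0) m (fun x => B x.2.1 (A x.1 (C x.2.2 v)))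
    - (expand (1, 0, 0) (0, 1, 0) m (fun x => C x.2.2 (A x.1 (B x.2.1 v)))
      - msign m • expand (0, 1, 0) (1, 0, 0) m (fun x => C x.2.2 (B x.2.1 (A x.1 v))))

variable {A B C : Ser M}

omit [CharZero k] in
theorem resProdCommArr_apply (hA : IsFieldSer A) (hB : IsFieldSer B)
    (hlA : IsLinSer (k := k) A) (hlB : IsLinSer (k := k) B) (hlC : IsLinSer (k := k) C)
    (m s t : ℤ) (v : M) :
    resProdCommArr A B C m v (0, s, t) = resProd A B m s (C t v) - C t (resProd A B m s v) := by
  obtain ⟨I, hI⟩ := Filter.eventually_atTop.mp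
    (((hA.eventually_eq_zero (C t v) 0).and (hA.eventually_eq_zero v 0)).and
      ((hB.eventually_eq_zero (C t v) s).and (hB.eventually_eq_zero v s)))
  simp only [zero_add] at hI
  have hA₀ n : A n 0 = 0 := (hlA n).map_zero
  have hB₀ n : B n 0 = 0 := (hlB n).map_zero
  have hC₀ : C t 0 = 0 := (hlC t).map_zero
  rw [resProd_eq_sum hA₀ hB₀ (fun i hi => (hI i hi).1.1) (fun i hi => (hI i hi).2.1),
    resProd_eq_sum hA₀ hB₀ (fun i hi => (hI i hi).1.2) (fun i hi => (hI i hi).2.2)]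
  simp only [resProdCommArr, Pi.sub_apply, Pi.smul_apply, expand, Prod.smul_mk, smul_eq_mul,
    mul_one, mul_zero, Prod.mk_add_mk, add_zero, zero_add]
  rw [finsum_eq_sum_range fun i hi => by rw [(hI i hi).2.1, hA₀, smul_zero],
    finsum_eq_sum_range fun i hi => by rw [(hI i hi).1.1, hB₀, smul_zero],
    finsum_eq_sum_range fun i hi => by rw [(hI i hi).2.2, hA₀, hC₀, smul_zero],
    finsum_eq_sum_range fun i hi => by rw [(hI i hi).1.2, hB₀, hC₀, smul_zero]]
  have hC (y : M) : C t y = IsLinearMap.mk' (C t) (hlC t) y := rfl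
  rw [hC (_ - _), map_sub, map_zsmul, map_sum, map_sum]
  simp only [map_zsmul, IsLinearMap.mk'_apply]

omit [CharZero k] in
theorem pow_smul_resProdCommArr_eq_zero (hA : IsFieldSer A) (hB : IsFieldSer B)
    (hlA : IsLinSer (k := k) A) (hlB : IsLinSer (k := k) B) (hlC : IsLinSer (k := k) C)
    {a b c N : ℕ} (hAC : IsLocalAt A C a) (hBC : IsLocalAt B C b) (hAB : IsLocalAt A B c) {m : ℤ}
    (hN : a + b + c ≤ m + N + 1) (v : M) :
    (σ₂ - σ₃) ^ N • resProdCommArr A B C m v = 0 := by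
  let φ {D : Ser M} (hlD : IsLinSer (k := k) D) (n : ℤ) : M →+ M := IsLinearMap.mk' (D n) (hlD n)
  have hA₀ n : A n 0 = 0 := (hlA n).map_zero
  have hB₀ n : B n 0 = 0 := (hlB n).map_zero
  have hC₀ n : C n 0 = 0 := (hlC n).map_zero
  let F₁ : truncated M (1, 0, 0) (0, 1, 0) := ⟨fun x => A x.1 (B x.2.1 (C x.2.2 v)),
    mem_truncated₁₂ fun t => (hB (C t v)).imp fun _ h r s hs => by simp [h s hs, hA₀]⟩
  let F₃ : truncated M (1, 0, 0) (0, 1, 0) := ⟨fun x => C x.2.2 (A x.1 (B x.2.1 v)),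
    mem_truncated₁₂ fun t => (hB v).imp fun _ h r s hs => by simp [h s hs, hA₀, hC₀]⟩
  let F₅ : truncated M (1, 0, 0) (0, 1, 0) := ⟨fun x => A x.1 (C x.2.2 (B x.2.1 v)),
    mem_truncated₁₂ fun t => (hB v).imp fun _ h r s hs => by simp [h s hs, hA₀, hC₀]⟩
  let F₂ : truncated M (0, 1, 0) (1, 0, 0) := ⟨fun x => B x.2.1 (A x.1 (C x.2.2 v)),
    mem_truncated₂₁ fun t => (hA (C t v)).imp fun _ h r s hr => by simp [h r hr, hB₀]⟩
  let F₄ : truncated M (0, 1, 0) (1, 0, 0) := ⟨fun x => C x.2.2 (B x.2.1 (A x.1 v)),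
    mem_truncated₂₁ fun t => (hA v).imp fun _ h r s hr => by simp [h r hr, hB₀, hC₀]⟩
  let F₆ : truncated M (0, 1, 0) (1, 0, 0) := ⟨fun x => B x.2.1 (C x.2.2 (A x.1 v)),
    mem_truncated₂₁ fun t => (hA v).imp fun _ h r s hr => by simp [h r hr, hB₀, hC₀]⟩
  have h₁₂ : (σ₁ - σ₂) ^ c • ((F₁ : Arr3 M) - F₂) = 0 := funext fun ⟨r, s, t⟩ =>
    (σ₁_sub_σ₂_pow_smul_apply ..).trans (hAB.sum_map_commutator_eq_zero (.id M) r s (C t v))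
  have h₃₄ : (σ₁ - σ₂) ^ c • ((F₃ : Arr3 M) - F₄) = 0 := funext fun ⟨r, s, t⟩ =>
    (σ₁_sub_σ₂_pow_smul_apply ..).trans (hAB.sum_map_commutator_eq_zero (φ hlC t) r s v)
  have h₅₃ : (σ₁ - σ₃) ^ a • ((F₅ : Arr3 M) - F₃) = 0 := funext fun ⟨r, s, t⟩ =>
    (σ₁_sub_σ₃_pow_smul_apply ..).trans (hAC.sum_map_commutator_eq_zero (.id M) r t (B s v))
  have h₂₆ : (σ₁ - σ₃) ^ a • ((F₂ : Arr3 M) - F₆) = 0 := funext fun ⟨r, s, t⟩ =>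
    (σ₁_sub_σ₃_pow_smul_apply ..).trans (hAC.sum_map_commutator_eq_zero (φ hlB s) r t v)
  have h₁₅ : (σ₂ - σ₃) ^ b • ((F₁ : Arr3 M) - F₅) = 0 := funext fun ⟨r, s, t⟩ =>
    (σ₂_sub_σ₃_pow_smul_apply ..).trans (hBC.sum_map_commutator_eq_zero (φ hlA r) s t v)
  have h₆₄ : (σ₂ - σ₃) ^ b • ((F₆ : Arr3 M) - F₄) = 0 := funext fun ⟨r, s, t⟩ =>
    (σ₂_sub_σ₃_pow_smul_apply ..).trans (hBC.sum_map_commutator_eq_zero (.id M) s t (A r v))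
  have := dong (expandₗ (1, 0, 0) (0, 1, 0)) (fun j => msign j • expandₗ (0, 1, 0) (1, 0, 0) j)
    (fun u => isLadder_expand u.2) (fun u => isLadder_msign_smul_expand u.2)
    (fun u => expand_zero _) (fun u => by simp [msign_zero, expand_zero])
    h₁₂ h₃₄ h₅₃ h₂₆ h₁₅ h₆₄ hN
  simp only [expandₗ_apply, LinearMap.smul_apply] at this
  rwa [resProdCommArr]

end Arr3

omit [CharZero k] in
theorem isLocalAt_resProd {A B C : Ser M} (hA : IsFieldSer A) (hB : IsFieldSer B)
    (hlA : IsLinSer (k := k) A) (hlB : IsLinSer (k := k) B) (hlC : IsLinSer (k := k) C)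
    {a b c N : ℕ} (hAC : IsLocalAt A C a) (hBC : IsLocalAt B C b) (hAB : IsLocalAt A B c) {m : ℤ}
    (hN : a + b + c ≤ m + N + 1) : IsLocalAt (resProd A B m) C N := by
  refine isLocalAt_iff_sum_commutator.mpr fun p q v => ?_
  have h := congrFun (Arr3.pow_smul_resProdCommArr_eq_zero hA hB hlA hlB hlC hAC hBC hAB hN v)
    (0, p, q)
  rw [Arr3.σ₂_sub_σ₃_pow_smul_apply] at h
  simpa only [Arr3.resProdCommArr_apply hA hB hlA hlB hlC, Pi.zero_apply] using h

theorem stmt8_general (A B C : Ser M)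
    (hA : IsFieldSer A) (hB : IsFieldSer B)
    (hlA : IsLinSer (k := k) A) (hlB : IsLinSer (k := k) B) (hlC : IsLinSer (k := k) C)
    (k₀ l₀ m₀ : ℕ) (hAC : HasOrder A C k₀) (hBC : HasOrder B C l₀) (hAB : HasOrder A B m₀)
    (m : ℤ) :
    (∃ n : ℕ, IsLocalAt (resProd A B m) C n) ∧
    (m < (m₀ : ℤ) → ∀ N : ℕ, (N : ℤ) = (k₀ : ℤ) + l₀ + m₀ - m - 1 →
      IsLocalAt (resProd A B m) C N) := by
  have key (N : ℕ) (hN : (k₀ + l₀ + m₀ : ℕ) ≤ m + N + 1) : IsLocalAt (resProd A B m) C N :=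
    isLocalAt_resProd hA hB hlA hlB hlC hAC.1 hBC.1 hAB.1 hN
  exact ⟨⟨_, key (k₀ + l₀ + m₀ - m - 1).toNat (by omega)⟩, fun _ N hN => key N (by omega)⟩

/-- If `A, B, C` are pairwise mutually local fields, then `A(z)_(m)B(z)` is mutually
local with `C(z)` for every `m`, with order at most `k₀ + l₀ + m₀ - m - 1` when
`m < m₀`, where `k₀, l₀, m₀` are the orders of locality of (A,C), (B,C), (A,B). -/
theorem stmt8 (A B C : Ser M)
    (hA : IsFieldSer A) (hB : IsFieldSer B) (hC : IsFieldSer C)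
    (hlA : IsLinSer (k := k) A) (hlB : IsLinSer (k := k) B) (hlC : IsLinSer (k := k) C)
    (k₀ l₀ m₀ : ℕ) (hAC : HasOrder A C k₀) (hBC : HasOrder B C l₀) (hAB : HasOrder A B m₀)
    (m : ℤ) :
    (∃ n : ℕ, IsLocalAt (resProd A B m) C n) ∧
    (m < (m₀ : ℤ) → ∀ N : ℕ, (N : ℤ) = (k₀ : ℤ) + l₀ + m₀ - m - 1 →
      IsLocalAt (resProd A B m) C N) :=
  stmt8_general A B C hA hB hlA hlB hlC k₀ l₀ m₀ hAC hBC hAB m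

end VA
end
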